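/- arXiv:2203.16862 — 11 statements merged into one kernel-verified Lean document; each statement's English description precedes it below -/
import Mathlib

section
/- Let J ⊆ ℝ be a nonempty open interval and let (m1,m2), (n1,n2), (k1,k2) be pairs of continuous functions J → ℝ such that the two members of each pair are strictly monotone in the same sense. Then the invariance equation M_{m1,m2}(M_{n1,n2}(u,v), M_{k1,k2}(u,v)) = M_{m1,m2}(u,v) holds for all u,v ∈ J if and only if, setting F := -m2 ∘ ((k1+k2)/2)^{-1}, f1 := m1 ∘ k1^{-1}, f2 := m2 ∘ k2^{-1}, G := m1 ∘ (n1+n2)^{-1}, g1 := n1 ∘ k1^{-1}, g2 := n2 ∘ k2^{-1}, the functional equation F((x+y)/2) + f1(x) + f2(y) = G(g1(x) + g2(y)) holds for all x ∈ k1(J) and y ∈ k2(J). -/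
open Set

/-- Reformulation of the invariance equation of Matkowski means.
The Matkowski means `Mm = 𝓜_{m1,m2}`, `Mn = 𝓜_{n1,n2}`, `Mk = 𝓜_{k1,k2}` are
characterized by their defining property: `M u v` is the (unique, by strict
monotonicity of the sum of the generators) point of `J` where `f + g` takes the
value `f u + g v`.  The composite functions `F, f1, f2, G, g1, g2` are
characterized by the defining properties of
`F = -m2 ∘ ((k1+k2)/2)⁻¹`, `f1 = m1 ∘ k1⁻¹`, `f2 = m2 ∘ k2⁻¹`,
`G = m1 ∘ (n1+n2)⁻¹`, `g1 = n1 ∘ k1⁻¹`, `g2 = n2 ∘ k2⁻¹`. -/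
theorem stmt0
    (J : Set ℝ) (hJo : IsOpen J) (hJc : J.OrdConnected) (hJne : J.Nonempty)
    (m1 m2 n1 n2 k1 k2 : ℝ → ℝ)
    (hm1c : ContinuousOn m1 J) (hm2c : ContinuousOn m2 J)
    (hn1c : ContinuousOn n1 J) (hn2c : ContinuousOn n2 J)
    (hk1c : ContinuousOn k1 J) (hk2c : ContinuousOn k2 J)
    (hm : (StrictMonoOn m1 J ∧ StrictMonoOn m2 J) ∨
          (StrictAntiOn m1 J ∧ StrictAntiOn m2 J))
    (hn : (StrictMonoOn n1 J ∧ StrictMonoOn n2 J) ∨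
          (StrictAntiOn n1 J ∧ StrictAntiOn n2 J))
    (hk : (StrictMonoOn k1 J ∧ StrictMonoOn k2 J) ∨
          (StrictAntiOn k1 J ∧ StrictAntiOn k2 J))
    (Mm Mn Mk : ℝ → ℝ → ℝ)
    (hMm : ∀ u ∈ J, ∀ v ∈ J, Mm u v ∈ J ∧
      m1 (Mm u v) + m2 (Mm u v) = m1 u + m2 v)
    (hMn : ∀ u ∈ J, ∀ v ∈ J, Mn u v ∈ J ∧
      n1 (Mn u v) + n2 (Mn u v) = n1 u + n2 v)
    (hMk : ∀ u ∈ J, ∀ v ∈ J, Mk u v ∈ J ∧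
      k1 (Mk u v) + k2 (Mk u v) = k1 u + k2 v)
    (F f1 f2 G g1 g2 : ℝ → ℝ)
    (hF : ∀ w ∈ J, F ((k1 w + k2 w) / 2) = - m2 w)
    (hf1 : ∀ w ∈ J, f1 (k1 w) = m1 w)
    (hf2 : ∀ w ∈ J, f2 (k2 w) = m2 w)
    (hG : ∀ w ∈ J, G (n1 w + n2 w) = m1 w)
    (hg1 : ∀ w ∈ J, g1 (k1 w) = n1 w)
    (hg2 : ∀ w ∈ J, g2 (k2 w) = n2 w) :
    (∀ u ∈ J, ∀ v ∈ J, Mm (Mn u v) (Mk u v) = Mm u v) ↔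
      (∀ x ∈ k1 '' J, ∀ y ∈ k2 '' J,
        F ((x + y) / 2) + f1 x + f2 y = G (g1 x + g2 y)) := by

  have hinj : InjOn (fun t => m1 t + m2 t) J := by
    rcases hm with ⟨h1, h2⟩ | ⟨h1, h2⟩
    · have : StrictMonoOn (fun t => m1 t + m2 t) J := fun a ha b hb hab => by
        dsimp only; exact add_lt_add (h1 ha hb hab) (h2 ha hb hab)
      exact this.injOn
    · have : StrictAntiOn (fun t => m1 t + m2 t) J := fun a ha b hb hab => by
        dsimp only; exact add_lt_add (h1 ha hb hab) (h2 ha hb hab)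
      exact this.injOn
  constructor
  · intro H x hx y hy
    obtain ⟨u, hu, rfl⟩ := hx
    obtain ⟨v, hv, rfl⟩ := hy
    obtain ⟨hwk, hek⟩ := hMk u hu v hv
    obtain ⟨hwn, hen⟩ := hMn u hu v hv
    have h1 : F ((k1 u + k2 v) / 2) = - m2 (Mk u v) := by rw [← hek]; exact hF _ hwk
    have h2 : G (g1 (k1 u) + g2 (k2 v)) = m1 (Mn u v) := by
      rw [hg1 u hu, hg2 v hv, ← hen]; exact hG _ hwn
    rw [h1, h2, hf1 u hu, hf2 v hv]
    have h3 := H u hu v hv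
    obtain ⟨hwm, hem⟩ := hMm (Mn u v) hwn (Mk u v) hwk
    obtain ⟨hwm', hem'⟩ := hMm u hu v hv
    rw [h3] at hem
    linarith
  · intro H u hu v hv
    obtain ⟨hwk, hek⟩ := hMk u hu v hv
    obtain ⟨hwn, hen⟩ := hMn u hu v hv
    have key := H (k1 u) ⟨u, hu, rfl⟩ (k2 v) ⟨v, hv, rfl⟩
    have h1 : F ((k1 u + k2 v) / 2) = - m2 (Mk u v) := by rw [← hek]; exact hF _ hwk
    have h2 : G (g1 (k1 u) + g2 (k2 v)) = m1 (Mn u v) := by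
      rw [hg1 u hu, hg2 v hv, ← hen]; exact hG _ hwn
    rw [h1, h2, hf1 u hu, hf2 v hv] at key
    obtain ⟨hwm, hem⟩ := hMm (Mn u v) hwn (Mk u v) hwk
    obtain ⟨hwm', hem'⟩ := hMm u hu v hv
    exact hinj hwm hwm' (by simp only []; linarith)
end

section
/- Let I ⊆ ℝ be a nonempty open interval and suppose (F,f1,f2,G,g1,g2) solves equation (1), where each of F, f1, f2, g1, g2 : I → ℝ and G : g1(I)+g2(I) → ℝ is differentiable and g1'(x) ≠ 0 and g2'(x) ≠ 0 for all x ∈ I. Define φ := F'/2, ψ_k := 1/g1' + (-1)^k / g2' and Ψ_k := -f1'/g1' + (-1)^{k-1} f2'/g2' for k ∈ {1,2}. Then for all x,y ∈ I one has φ((x+y)/2)·(ψ1(x) + ψ1(y)) = Ψ1(x) + Ψ1(y) and φ((x+y)/2)·(ψ2(x) − ψ2(y)) = Ψ2(x) − Ψ2(y). -/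
/-!
Differentiating (1) in `x` and in `y` gives `F'(m)/2 + f1'(x) = G'(u) g1'(x)` and
`F'(m)/2 + f2'(y) = G'(u) g2'(y)`, with `m = (x+y)/2`, `u = g1 x + g2 y`. Dividing by `g1'(x)`,
`g2'(y)` and subtracting eliminates `G'(u)`:
`φ(m) (1/g1'(x) - 1/g2'(y)) = -f1'(x)/g1'(x) + f2'(y)/g2'(y)`.
Adding and subtracting this relation and its copy with `x` and `y` exchanged gives the two
equations.
-/

open Set

/-- Equation (1): `F((x+y)/2) + f1(x) + f2(y) = G(g1(x) + g2(y))` for all `x, y ∈ I`. -/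
def SolvesEq1 (I : Set ℝ) (F f1 f2 G g1 g2 : ℝ → ℝ) : Prop :=
  ∀ x ∈ I, ∀ y ∈ I, F ((x + y) / 2) + f1 x + f2 y = G (g1 x + g2 y)

lemma Set.OrdConnected.add_div_two_mem {I : Set ℝ} (hI : I.OrdConnected) {x y : ℝ}
    (hx : x ∈ I) (hy : y ∈ I) : (x + y) / 2 ∈ I := by
  rcases le_total x y with h | h
  · exact hI.out hx hy ⟨by linarith, by linarith⟩
  · exact hI.out hy hx ⟨by linarith, by linarith⟩

lemma SolvesEq1.swap {I : Set ℝ} {F f1 f2 G g1 g2 : ℝ → ℝ} (hsol : SolvesEq1 I F f1 f2 G g1 g2) :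
    SolvesEq1 I F f2 f1 G g2 g1 := by
  intro y hy x hx
  rw [add_comm y x, add_right_comm, add_comm (g2 y)]
  exact hsol x hx y hy

variable {I S : Set ℝ} {F f1 f2 G g1 g2 : ℝ → ℝ} {x y F' f1' f2' g1' g2' G' : ℝ}

lemma SolvesEq1.deriv_left_eq (hsol : SolvesEq1 I F f1 f2 G g1 g2) (hIo : IsOpen I)
    (hS : ∀ x ∈ I, ∀ y ∈ I, g1 x + g2 y ∈ S) (hx : x ∈ I) (hy : y ∈ I)
    (hF : HasDerivAt F F' ((x + y) / 2)) (hf1 : HasDerivAt f1 f1' x)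
    (hg1 : HasDerivAt g1 g1' x) (hG : HasDerivWithinAt G G' S (g1 x + g2 y)) :
    F' / 2 + f1' = G' * g1' := by
  have hmid : HasDerivAt (fun t : ℝ => (t + y) / 2) (1 / 2) x := by
    simpa using ((hasDerivAt_id x).add_const y).div_const 2
  have hlhs : HasDerivAt (fun t => F ((t + y) / 2) + f1 t + f2 y) (F' * (1 / 2) + f1') x :=
    ((hF.comp x hmid).add hf1).add_const (f2 y)
  have hrhs : HasDerivAt (fun t => G (g1 t + g2 y)) (G' * g1') x :=
    (hG.comp x (hg1.add_const (g2 y)).hasDerivWithinAt fun t ht => hS t ht y hy).hasDerivAt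
      (hIo.mem_nhds hx)
  have heq : (fun t => F ((t + y) / 2) + f1 t + f2 y) =ᶠ[nhds x] fun t => G (g1 t + g2 y) :=
    Filter.eventually_of_mem (hIo.mem_nhds hx) fun t ht => hsol t ht y hy
  linarith [(hrhs.congr_of_eventuallyEq heq).unique hlhs]

lemma SolvesEq1.deriv_right_eq (hsol : SolvesEq1 I F f1 f2 G g1 g2) (hIo : IsOpen I)
    (hS : ∀ x ∈ I, ∀ y ∈ I, g1 x + g2 y ∈ S) (hx : x ∈ I) (hy : y ∈ I)
    (hF : HasDerivAt F F' ((x + y) / 2)) (hf2 : HasDerivAt f2 f2' y)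
    (hg2 : HasDerivAt g2 g2' y) (hG : HasDerivWithinAt G G' S (g1 x + g2 y)) :
    F' / 2 + f2' = G' * g2' := by
  rw [add_comm x y] at hF
  rw [add_comm] at hG
  exact hsol.swap.deriv_left_eq hIo (fun y hy x hx => add_comm (g1 x) (g2 y) ▸ hS x hx y hy)
    hy hx hF hf2 hg2 hG

lemma SolvesEq1.cross_relation (hsol : SolvesEq1 I F f1 f2 G g1 g2) (hIo : IsOpen I)
    (hS : ∀ x ∈ I, ∀ y ∈ I, g1 x + g2 y ∈ S) (hx : x ∈ I) (hy : y ∈ I)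
    (hF : HasDerivAt F F' ((x + y) / 2)) (hf1 : HasDerivAt f1 f1' x) (hf2 : HasDerivAt f2 f2' y)
    (hg1 : HasDerivAt g1 g1' x) (hg2 : HasDerivAt g2 g2' y)
    (hG : HasDerivWithinAt G G' S (g1 x + g2 y)) (hg1' : g1' ≠ 0) (hg2' : g2' ≠ 0) :
    F' / 2 * (1 / g1' - 1 / g2') = -(f1' / g1') + f2' / g2' := by
  have hdx := hsol.deriv_left_eq hIo hS hx hy hF hf1 hg1 hG
  have hdy := hsol.deriv_right_eq hIo hS hx hy hF hf2 hg2 hG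
  calc F' / 2 * (1 / g1' - 1 / g2')
      = (F' / 2 + f1') / g1' - (F' / 2 + f2') / g2' - f1' / g1' + f2' / g2' := by ring
    _ = G' - G' - f1' / g1' + f2' / g2' := by
      rw [hdx, hdy, mul_div_cancel_right₀ _ hg1', mul_div_cancel_right₀ _ hg2']
    _ = -(f1' / g1') + f2' / g2' := by ring

theorem stmt1_general
    (I : Set ℝ) (hIo : IsOpen I) (hIc : I.OrdConnected)
    (F f1 f2 G g1 g2 F' f1' f2' g1' g2' G' : ℝ → ℝ)
    (hsol : SolvesEq1 I F f1 f2 G g1 g2)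
    (hF : ∀ x ∈ I, HasDerivAt F (F' x) x)
    (hf1 : ∀ x ∈ I, HasDerivAt f1 (f1' x) x)
    (hf2 : ∀ x ∈ I, HasDerivAt f2 (f2' x) x)
    (hg1 : ∀ x ∈ I, HasDerivAt g1 (g1' x) x)
    (hg2 : ∀ x ∈ I, HasDerivAt g2 (g2' x) x)
    (hG : ∀ u ∈ {u : ℝ | ∃ x ∈ I, ∃ y ∈ I, u = g1 x + g2 y},
      HasDerivWithinAt G (G' u) {u : ℝ | ∃ x ∈ I, ∃ y ∈ I, u = g1 x + g2 y} u)
    (hg1' : ∀ x ∈ I, g1' x ≠ 0) (hg2' : ∀ x ∈ I, g2' x ≠ 0) :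
    ∀ x ∈ I, ∀ y ∈ I,
      (F' ((x + y) / 2) / 2) *
          ((1 / g1' x - 1 / g2' x) + (1 / g1' y - 1 / g2' y)) =
        (-(f1' x / g1' x) + f2' x / g2' x) + (-(f1' y / g1' y) + f2' y / g2' y) ∧
      (F' ((x + y) / 2) / 2) *
          ((1 / g1' x + 1 / g2' x) - (1 / g1' y + 1 / g2' y)) =
        (-(f1' x / g1' x) - f2' x / g2' x) - (-(f1' y / g1' y) - f2' y / g2' y) := by
  have hS : ∀ x ∈ I, ∀ y ∈ I, g1 x + g2 y ∈ {u : ℝ | ∃ x ∈ I, ∃ y ∈ I, u = g1 x + g2 y} :=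
    fun x hx y hy => ⟨x, hx, y, hy, rfl⟩
  have cross : ∀ x ∈ I, ∀ y ∈ I, F' ((x + y) / 2) / 2 * (1 / g1' x - 1 / g2' y) =
      -(f1' x / g1' x) + f2' y / g2' y := fun x hx y hy =>
    hsol.cross_relation hIo hS hx hy (hF _ (hIc.add_div_two_mem hx hy)) (hf1 x hx) (hf2 y hy)
      (hg1 x hx) (hg2 y hy) (hG _ (hS x hx y hy)) (hg1' x hx) (hg2' y hy)
  intro x hx y hy
  have hxy := cross x hx y hy
  have hyx := cross y hy x hx
  rw [add_comm y x] at hyx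
  constructor
  · linear_combination hxy + hyx
  · linear_combination hxy - hyx

/-- If `(F,f1,f2,G,g1,g2)` is a differentiable solution of equation (1)
with `g1' , g2'` nonvanishing on `I`, then the system of functional equations
`φ((x+y)/2)(ψ₁(x)+ψ₁(y)) = Ψ₁(x)+Ψ₁(y)` and `φ((x+y)/2)(ψ₂(x)−ψ₂(y)) = Ψ₂(x)−Ψ₂(y)` holds,
where `φ = F'/2`, `ψ_k = 1/g1' + (-1)^k/g2'`, `Ψ_k = -f1'/g1' + (-1)^{k-1} f2'/g2'`. -/
theorem stmt1
    (I : Set ℝ) (hIo : IsOpen I) (hIc : I.OrdConnected) (hIne : I.Nonempty)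
    (F f1 f2 G g1 g2 F' f1' f2' g1' g2' G' : ℝ → ℝ)
    (hsol : SolvesEq1 I F f1 f2 G g1 g2)
    (hF : ∀ x ∈ I, HasDerivAt F (F' x) x)
    (hf1 : ∀ x ∈ I, HasDerivAt f1 (f1' x) x)
    (hf2 : ∀ x ∈ I, HasDerivAt f2 (f2' x) x)
    (hg1 : ∀ x ∈ I, HasDerivAt g1 (g1' x) x)
    (hg2 : ∀ x ∈ I, HasDerivAt g2 (g2' x) x)
    (hG : ∀ u ∈ {u : ℝ | ∃ x ∈ I, ∃ y ∈ I, u = g1 x + g2 y},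
      HasDerivWithinAt G (G' u) {u : ℝ | ∃ x ∈ I, ∃ y ∈ I, u = g1 x + g2 y} u)
    (hg1' : ∀ x ∈ I, g1' x ≠ 0) (hg2' : ∀ x ∈ I, g2' x ≠ 0) :
    ∀ x ∈ I, ∀ y ∈ I,
      (F' ((x + y) / 2) / 2) *
          ((1 / g1' x - 1 / g2' x) + (1 / g1' y - 1 / g2' y)) =
        (-(f1' x / g1' x) + f2' x / g2' x) + (-(f1' y / g1' y) + f2' y / g2' y) ∧
      (F' ((x + y) / 2) / 2) *
          ((1 / g1' x + 1 / g2' x) - (1 / g1' y + 1 / g2' y)) =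
        (-(f1' x / g1' x) - f2' x / g2' x) - (-(f1' y / g1' y) - f2' y / g2' y) :=
  stmt1_general I hIo hIc F f1 f2 G g1 g2 F' f1' f2' g1' g2' G' hsol hF hf1 hf2 hg1 hg2 hG hg1' hg2'
end

section
/- Let I ⊆ ℝ be a nonempty open interval, let g1, g2 : I → ℝ be continuous functions strictly monotone in the same sense, and let U = (a,b) ⊆ I with a < b. For x ∈ I define U_1(x) := {y ∈ U : g1(x)+g2(y) ∈ g1(U)+g2(U)} and U_2(x) := {y ∈ U : g1(y)+g2(x) ∈ g1(U)+g2(U)}. Then for k ∈ {1,2}: (i) if a ∈ I then U ⊆ U_k(a), and if b ∈ I then U ⊆ U_k(b); (ii) if a ∈ I then there exists x ∈ I with x < a and U_k(x) ≠ ∅, and if b ∈ I then there exists x ∈ I with b < x and U_k(x) ≠ ∅. -/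
open Set Pointwise

/-- `U_1(x) = {y ∈ U : g1(x) + g2(y) ∈ g1(U) + g2(U)}`. -/
def Uset1 (g1 g2 : ℝ → ℝ) (U : Set ℝ) (x : ℝ) : Set ℝ :=
  {y ∈ U | g1 x + g2 y ∈ g1 '' U + g2 '' U}

/-- `U_2(x) = {y ∈ U : g1(y) + g2(x) ∈ g1(U) + g2(U)}`. -/
def Uset2 (g1 g2 : ℝ → ℝ) (U : Set ℝ) (x : ℝ) : Set ℝ :=
  {y ∈ U | g1 y + g2 x ∈ g1 '' U + g2 '' U}

lemma sum_neg_mem (g1 g2 : ℝ → ℝ) (U : Set ℝ) (z : ℝ) :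
    z ∈ g1 '' U + g2 '' U ↔
      -z ∈ (fun t => -(g1 t)) '' U + (fun t => -(g2 t)) '' U := by
  simp only [Set.mem_add, Set.mem_image]
  constructor
  · rintro ⟨_, ⟨u, hu, rfl⟩, _, ⟨v, hv, rfl⟩, h⟩
    exact ⟨-(g1 u), ⟨u, hu, rfl⟩, -(g2 v), ⟨v, hv, rfl⟩, by linarith⟩
  · rintro ⟨_, ⟨u, hu, rfl⟩, _, ⟨v, hv, rfl⟩, h⟩
    exact ⟨g1 u, ⟨u, hu, rfl⟩, g2 v, ⟨v, hv, rfl⟩, by linarith⟩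

lemma Uset1_neg (g1 g2 : ℝ → ℝ) (U : Set ℝ) (x : ℝ) :
    Uset1 g1 g2 U x = Uset1 (fun t => -(g1 t)) (fun t => -(g2 t)) U x := by
  ext y
  simp only [Uset1, Set.mem_setOf_eq]
  constructor
  · rintro ⟨h1, h2⟩
    refine ⟨h1, ?_⟩
    have := (sum_neg_mem g1 g2 U _).mp h2
    show -(g1 x) + -(g2 y) ∈ _
    rw [show (-(g1 x) + -(g2 y) : ℝ) = -(g1 x + g2 y) by ring]
    exact this
  · rintro ⟨h1, h2⟩
    refine ⟨h1, ?_⟩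
    refine (sum_neg_mem g1 g2 U (g1 x + g2 y)).mpr ?_
    rw [show (-(g1 x + g2 y) : ℝ) = -(g1 x) + -(g2 y) by ring]
    exact h2

lemma Uset2_neg (g1 g2 : ℝ → ℝ) (U : Set ℝ) (x : ℝ) :
    Uset2 g1 g2 U x = Uset2 (fun t => -(g1 t)) (fun t => -(g2 t)) U x := by
  ext y
  simp only [Uset2, Set.mem_setOf_eq]
  constructor
  · rintro ⟨h1, h2⟩
    refine ⟨h1, ?_⟩
    have := (sum_neg_mem g1 g2 U _).mp h2
    show -(g1 y) + -(g2 x) ∈ _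
    rw [show (-(g1 y) + -(g2 x) : ℝ) = -(g1 y + g2 x) by ring]
    exact this
  · rintro ⟨h1, h2⟩
    refine ⟨h1, ?_⟩
    refine (sum_neg_mem g1 g2 U (g1 y + g2 x)).mpr ?_
    rw [show (-(g1 y + g2 x) : ℝ) = -(g1 y) + -(g2 x) by ring]
    exact h2

/-- Key: the sumset contains the open interval between diagonal values. -/
lemma keyS {I : Set ℝ} (hIc : I.OrdConnected) {g1 g2 : ℝ → ℝ}
    (hg1c : ContinuousOn g1 I) (hg2c : ContinuousOn g2 I)
    (hm1 : StrictMonoOn g1 I) (hm2 : StrictMonoOn g2 I)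
    {a b p q c : ℝ} (hp : p ∈ I) (hq : q ∈ I) (hap : a ≤ p) (hpq : p < q) (hqb : q ≤ b)
    (hc1 : g1 p + g2 p < c) (hc2 : c < g1 q + g2 q) :
    c ∈ g1 '' (Set.Ioo a b) + g2 '' (Set.Ioo a b) := by
  set D1 := g1 q - g1 p with hD1def
  set D2 := g2 q - g2 p with hD2def
  have hD1 : 0 < D1 := sub_pos.2 (hm1 hp hq hpq)
  have hD2 : 0 < D2 := sub_pos.2 (hm2 hp hq hpq)
  set t := c - g1 p - g2 p with htdef
  have ht : 0 < t := by simp [htdef]; linarith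
  have htD : t < D1 + D2 := by simp [htdef, hD1def, hD2def]; linarith
  obtain ⟨t1, ht1l, ht1r⟩ : ∃ t1, max 0 (t - D2) < t1 ∧ t1 < min t D1 :=
    exists_between (by
      rcases le_or_gt 0 (t - D2) with h | h
      · rw [max_eq_right h]; exact lt_min (by linarith) (by linarith)
      · rw [max_eq_left h.le]; exact lt_min ht hD1)
  have ht1pos : 0 < t1 := lt_of_le_of_lt (le_max_left _ _) ht1l
  have ht1t : t1 < t := lt_of_lt_of_le ht1r (min_le_left _ _)
  have ht1D1 : t1 < D1 := lt_of_lt_of_le ht1r (min_le_right _ _)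
  have ht2 : t - D2 < t1 := lt_of_le_of_lt (le_max_right _ _) ht1l
  have hIcc : Set.Icc p q ⊆ I := hIc.out hp hq
  have h1 : g1 p + t1 ∈ g1 '' (Set.Ioo p q) :=
    intermediate_value_Ioo hpq.le (hg1c.mono hIcc) ⟨by linarith, by linarith⟩
  have h2 : g2 p + (t - t1) ∈ g2 '' (Set.Ioo p q) :=
    intermediate_value_Ioo hpq.le (hg2c.mono hIcc) ⟨by linarith, by linarith⟩
  obtain ⟨u, hu, hu2⟩ := h1
  obtain ⟨v, hv, hv2⟩ := h2
  have huab : u ∈ Set.Ioo a b := ⟨lt_of_le_of_lt hap hu.1, lt_of_lt_of_le hu.2 hqb⟩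
  have hvab : v ∈ Set.Ioo a b := ⟨lt_of_le_of_lt hap hv.1, lt_of_lt_of_le hv.2 hqb⟩
  rw [Set.mem_add]
  exact ⟨g1 u, Set.mem_image_of_mem g1 huab, g2 v, Set.mem_image_of_mem g2 hvab,
    by rw [hu2, hv2]; linarith⟩

lemma stmt2_mono
    (I : Set ℝ) (hIo : IsOpen I) (hIc : I.OrdConnected)
    (g1 g2 : ℝ → ℝ)
    (hg1c : ContinuousOn g1 I) (hg2c : ContinuousOn g2 I)
    (hm1 : StrictMonoOn g1 I) (hm2 : StrictMonoOn g2 I)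
    (a b : ℝ) (hab : a < b) (hUI : Set.Ioo a b ⊆ I) :
    (a ∈ I → Set.Ioo a b ⊆ Uset1 g1 g2 (Set.Ioo a b) a ∧
             Set.Ioo a b ⊆ Uset2 g1 g2 (Set.Ioo a b) a) ∧
    (b ∈ I → Set.Ioo a b ⊆ Uset1 g1 g2 (Set.Ioo a b) b ∧
             Set.Ioo a b ⊆ Uset2 g1 g2 (Set.Ioo a b) b) ∧
    (a ∈ I → (∃ x ∈ I, x < a ∧ (Uset1 g1 g2 (Set.Ioo a b) x).Nonempty) ∧
             (∃ x ∈ I, x < a ∧ (Uset2 g1 g2 (Set.Ioo a b) x).Nonempty)) ∧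
    (b ∈ I → (∃ x ∈ I, b < x ∧ (Uset1 g1 g2 (Set.Ioo a b) x).Nonempty) ∧
             (∃ x ∈ I, b < x ∧ (Uset2 g1 g2 (Set.Ioo a b) x).Nonempty)) := by
  refine ⟨?_, ?_, ?_, ?_⟩
  · -- (i) at a
    intro ha
    constructor
    · intro y hy
      set y' := (y + b) / 2 with hy'def
      have hyy' : y < y' := by simp [hy'def]; linarith [hy.2]
      have hy'b : y' < b := by simp [hy'def]; linarith [hy.2]
      have hy'mem : y' ∈ Set.Ioo a b := ⟨hy.1.trans hyy', hy'b⟩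
      refine ⟨hy, keyS hIc hg1c hg2c hm1 hm2 ha (hUI hy'mem) le_rfl
        (hy.1.trans hyy') hy'b.le ?_ ?_⟩
      · have := hm2 ha (hUI hy) hy.1; linarith
      · have h1 := hm1 ha (hUI hy'mem) (hy.1.trans hyy')
        have h2 := hm2 (hUI hy) (hUI hy'mem) hyy'
        linarith
    · intro y hy
      set y' := (y + b) / 2 with hy'def
      have hyy' : y < y' := by simp [hy'def]; linarith [hy.2]
      have hy'b : y' < b := by simp [hy'def]; linarith [hy.2]
      have hy'mem : y' ∈ Set.Ioo a b := ⟨hy.1.trans hyy', hy'b⟩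
      refine ⟨hy, keyS hIc hg1c hg2c hm1 hm2 ha (hUI hy'mem) le_rfl
        (hy.1.trans hyy') hy'b.le ?_ ?_⟩
      · have := hm1 ha (hUI hy) hy.1; linarith
      · have h1 := hm2 ha (hUI hy'mem) (hy.1.trans hyy')
        have h2 := hm1 (hUI hy) (hUI hy'mem) hyy'
        linarith
  · -- (i) at b
    intro hb
    constructor
    · intro y hy
      set y' := (a + y) / 2 with hy'def
      have hay' : a < y' := by simp [hy'def]; linarith [hy.1]
      have hy'y : y' < y := by simp [hy'def]; linarith [hy.1]
      have hy'mem : y' ∈ Set.Ioo a b := ⟨hay', hy'y.trans hy.2⟩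
      refine ⟨hy, keyS hIc hg1c hg2c hm1 hm2 (hUI hy'mem) hb hay'.le
        (hy'y.trans hy.2) le_rfl ?_ ?_⟩
      · have h1 := hm1 (hUI hy'mem) hb (hy'y.trans hy.2)
        have h2 := hm2 (hUI hy'mem) (hUI hy) hy'y
        linarith
      · have := hm2 (hUI hy) hb hy.2; linarith
    · intro y hy
      set y' := (a + y) / 2 with hy'def
      have hay' : a < y' := by simp [hy'def]; linarith [hy.1]
      have hy'y : y' < y := by simp [hy'def]; linarith [hy.1]
      have hy'mem : y' ∈ Set.Ioo a b := ⟨hay', hy'y.trans hy.2⟩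
      refine ⟨hy, keyS hIc hg1c hg2c hm1 hm2 (hUI hy'mem) hb hay'.le
        (hy'y.trans hy.2) le_rfl ?_ ?_⟩
      · have h1 := hm2 (hUI hy'mem) hb (hy'y.trans hy.2)
        have h2 := hm1 (hUI hy'mem) (hUI hy) hy'y
        linarith
      · have := hm1 (hUI hy) hb hy.2; linarith
  · -- (ii) at a
    intro ha
    set y := (a + b) / 2 with hydef
    have hy : y ∈ Set.Ioo a b := ⟨by simp [hydef]; linarith, by simp [hydef]; linarith⟩
    set y' := (y + b) / 2 with hy'def
    have hyy' : y < y' := by simp [hy'def]; linarith [hy.2]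
    have hy' : y' ∈ Set.Ioo a b := ⟨hy.1.trans hyy', by simp [hy'def]; linarith [hy.2]⟩
    have hε1 : 0 < g2 y - g2 a := sub_pos.2 (hm2 ha (hUI hy) hy.1)
    have hε2 : 0 < g1 y - g1 a := sub_pos.2 (hm1 ha (hUI hy) hy.1)
    -- find x < a, x ∈ I with g1 x close and g2 x close to values at a
    have hcont1 : ContinuousAt g1 a :=
      (hg1c a ha).continuousAt (hIo.mem_nhds ha)
    have hcont2 : ContinuousAt g2 a :=
      (hg2c a ha).continuousAt (hIo.mem_nhds ha)
    have hev : ∀ᶠ x in nhds a, x ∈ I ∧ g1 a - (g2 y - g2 a) < g1 x ∧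
        g2 a - (g1 y - g1 a) < g2 x := by
      have h1 : ∀ᶠ x in nhds a, x ∈ I := hIo.mem_nhds ha
      have h2 : ∀ᶠ x in nhds a, g1 a - (g2 y - g2 a) < g1 x :=
        hcont1.eventually (eventually_gt_nhds (by linarith))
      have h3 : ∀ᶠ x in nhds a, g2 a - (g1 y - g1 a) < g2 x :=
        hcont2.eventually (eventually_gt_nhds (by linarith))
      exact h1.and (h2.and h3)
    obtain ⟨x, hxlt, hxI, hx1, hx2⟩ : ∃ x, x < a ∧ x ∈ I ∧
        g1 a - (g2 y - g2 a) < g1 x ∧ g2 a - (g1 y - g1 a) < g2 x := by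
      have := (hev.filter_mono (nhdsWithin_le_nhds (s := Set.Iio a))).and
        self_mem_nhdsWithin
      obtain ⟨x, ⟨hI, h1, h2⟩, hxa⟩ := this.exists
      exact ⟨x, hxa, hI, h1, h2⟩
    have hg1xa : g1 x < g1 a := hm1 hxI ha hxlt
    have hg2xa : g2 x < g2 a := hm2 hxI ha hxlt
    constructor
    · refine ⟨x, hxI, hxlt, y, hy, ?_⟩
      refine keyS hIc hg1c hg2c hm1 hm2 ha (hUI hy') le_rfl (hy.1.trans hyy') hy'.2.le
        (by linarith) ?_
      have h1 := hm1 ha (hUI hy') hy'.1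
      have h2 := hm2 (hUI hy) (hUI hy') hyy'
      linarith
    · refine ⟨x, hxI, hxlt, y, hy, ?_⟩
      refine keyS hIc hg1c hg2c hm1 hm2 ha (hUI hy') le_rfl (hy.1.trans hyy') hy'.2.le
        (by linarith) ?_
      have h1 := hm2 ha (hUI hy') hy'.1
      have h2 := hm1 (hUI hy) (hUI hy') hyy'
      linarith
  · -- (ii) at b
    intro hb
    set y := (a + b) / 2 with hydef
    have hy : y ∈ Set.Ioo a b := ⟨by simp [hydef]; linarith, by simp [hydef]; linarith⟩
    set y' := (a + y) / 2 with hy'def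
    have hy'y : y' < y := by simp [hy'def]; linarith [hy.1]
    have hy' : y' ∈ Set.Ioo a b := ⟨by simp [hy'def]; linarith [hy.1], hy'y.trans hy.2⟩
    have hε1 : 0 < g2 b - g2 y := sub_pos.2 (hm2 (hUI hy) hb hy.2)
    have hε2 : 0 < g1 b - g1 y := sub_pos.2 (hm1 (hUI hy) hb hy.2)
    have hcont1 : ContinuousAt g1 b :=
      (hg1c b hb).continuousAt (hIo.mem_nhds hb)
    have hcont2 : ContinuousAt g2 b :=
      (hg2c b hb).continuousAt (hIo.mem_nhds hb)
    have hev : ∀ᶠ x in nhds b, x ∈ I ∧ g1 x < g1 b + (g2 b - g2 y) ∧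
        g2 x < g2 b + (g1 b - g1 y) := by
      have h1 : ∀ᶠ x in nhds b, x ∈ I := hIo.mem_nhds hb
      have h2 : ∀ᶠ x in nhds b, g1 x < g1 b + (g2 b - g2 y) :=
        hcont1.eventually (eventually_lt_nhds (by linarith))
      have h3 : ∀ᶠ x in nhds b, g2 x < g2 b + (g1 b - g1 y) :=
        hcont2.eventually (eventually_lt_nhds (by linarith))
      exact h1.and (h2.and h3)
    obtain ⟨x, hxgt, hxI, hx1, hx2⟩ : ∃ x, b < x ∧ x ∈ I ∧
        g1 x < g1 b + (g2 b - g2 y) ∧ g2 x < g2 b + (g1 b - g1 y) := by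
      have := (hev.filter_mono (nhdsWithin_le_nhds (s := Set.Ioi b))).and
        self_mem_nhdsWithin
      obtain ⟨x, ⟨hI, h1, h2⟩, hxb⟩ := this.exists
      exact ⟨x, hxb, hI, h1, h2⟩
    have hg1xb : g1 b < g1 x := hm1 hb hxI hxgt
    have hg2xb : g2 b < g2 x := hm2 hb hxI hxgt
    constructor
    · refine ⟨x, hxI, hxgt, y, hy, ?_⟩
      refine keyS hIc hg1c hg2c hm1 hm2 (hUI hy') hb hy'.1.le (hy'y.trans hy.2) le_rfl
        ?_ (by linarith)
      have h1 := hm1 (hUI hy') hb hy'.2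
      have h2 := hm2 (hUI hy') (hUI hy) hy'y
      linarith
    · refine ⟨x, hxI, hxgt, y, hy, ?_⟩
      refine keyS hIc hg1c hg2c hm1 hm2 (hUI hy') hb hy'.1.le (hy'y.trans hy.2) le_rfl
        ?_ (by linarith)
      have h1 := hm2 (hUI hy') hb hy'.2
      have h2 := hm1 (hUI hy') (hUI hy) hy'y
      linarith

/-- Parts (1) and (2) of Lemma 1: with `U = (a,b) ⊆ I`,
(i) if `a ∈ I` (resp. `b ∈ I`) then `U ⊆ U_k(a)` (resp. `U ⊆ U_k(b)`);
(ii) if `a ∈ I` (resp. `b ∈ I`) then there exists `x ∈ I` with `x < a` (resp. `b < x`)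
such that `U_k(x) ≠ ∅`, for `k ∈ {1,2}`. -/
theorem stmt2
    (I : Set ℝ) (hIo : IsOpen I) (hIc : I.OrdConnected) (hIne : I.Nonempty)
    (g1 g2 : ℝ → ℝ)
    (hg1c : ContinuousOn g1 I) (hg2c : ContinuousOn g2 I)
    (hmono : (StrictMonoOn g1 I ∧ StrictMonoOn g2 I) ∨
             (StrictAntiOn g1 I ∧ StrictAntiOn g2 I))
    (a b : ℝ) (hab : a < b) (hUI : Set.Ioo a b ⊆ I) :
    (a ∈ I → Set.Ioo a b ⊆ Uset1 g1 g2 (Set.Ioo a b) a ∧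
             Set.Ioo a b ⊆ Uset2 g1 g2 (Set.Ioo a b) a) ∧
    (b ∈ I → Set.Ioo a b ⊆ Uset1 g1 g2 (Set.Ioo a b) b ∧
             Set.Ioo a b ⊆ Uset2 g1 g2 (Set.Ioo a b) b) ∧
    (a ∈ I → (∃ x ∈ I, x < a ∧ (Uset1 g1 g2 (Set.Ioo a b) x).Nonempty) ∧
             (∃ x ∈ I, x < a ∧ (Uset2 g1 g2 (Set.Ioo a b) x).Nonempty)) ∧
    (b ∈ I → (∃ x ∈ I, b < x ∧ (Uset1 g1 g2 (Set.Ioo a b) x).Nonempty) ∧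
             (∃ x ∈ I, b < x ∧ (Uset2 g1 g2 (Set.Ioo a b) x).Nonempty)) := by
  rcases hmono with ⟨hm1, hm2⟩ | ⟨hm1, hm2⟩
  · exact stmt2_mono I hIo hIc g1 g2 hg1c hg2c hm1 hm2 a b hab hUI
  · have hm1' : StrictMonoOn (fun t => -(g1 t)) I :=
      fun x hx y hy hxy => neg_lt_neg (hm1 hx hy hxy)
    have hm2' : StrictMonoOn (fun t => -(g2 t)) I :=
      fun x hx y hy hxy => neg_lt_neg (hm2 hx hy hxy)
    have key := stmt2_mono I hIo hIc (fun t => -(g1 t)) (fun t => -(g2 t))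
      hg1c.neg hg2c.neg hm1' hm2' a b hab hUI
    simpa only [← Uset1_neg, ← Uset2_neg] using key
end

section
/- Let I ⊆ ℝ be a nonempty open interval, let g1, g2 : I → ℝ be continuous functions strictly monotone in the same sense, and let U = (a,b) ⊆ I with a < b. For x ∈ I define U_1(x) := {y ∈ U : g1(x)+g2(y) ∈ g1(U)+g2(U)} and U_2(x) := {y ∈ U : g1(y)+g2(x) ∈ g1(U)+g2(U)}. Then for k ∈ {1,2}: (i) if x ∈ I with x < a and U_k(x) ≠ ∅, then U_k(x) ⊆ U_k(u) for every u ∈ [x,a]; similarly if b < x and U_k(x) ≠ ∅, then U_k(x) ⊆ U_k(u) for every u ∈ [b,x]; (ii) if x ∈ I with x < a and U_k(x) ≠ ∅, then a < inf U_k(x) and sup U_k(x) = b; similarly if b < x and U_k(x) ≠ ∅, then sup U_k(x) < b and inf U_k(x) = a. -/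
open Set Pointwise

lemma sumset_ordConnected {I : Set ℝ} (g1 g2 : ℝ → ℝ)
    (hg1c : ContinuousOn g1 I) (hg2c : ContinuousOn g2 I)
    (a b : ℝ) (hUI : Set.Ioo a b ⊆ I) :
    (g1 '' Set.Ioo a b + g2 '' Set.Ioo a b).OrdConnected := by
  have h1 : Convex ℝ (g1 '' Set.Ioo a b) :=
    ((isPreconnected_Ioo.image g1 (hg1c.mono hUI)).ordConnected).convex
  have h2 : Convex ℝ (g2 '' Set.Ioo a b) :=
    ((isPreconnected_Ioo.image g2 (hg2c.mono hUI)).ordConnected).convex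
  exact (h1.add h2).ordConnected

lemma Uset2_eq (g1 g2 : ℝ → ℝ) (U : Set ℝ) (x : ℝ) :
    Uset2 g1 g2 U x = Uset1 g2 g1 U x := by
  ext y
  simp only [Uset1, Uset2, Set.mem_setOf_eq]
  rw [add_comm (g1 '' U) (g2 '' U), add_comm (g1 y) (g2 x)]

lemma key
    (I : Set ℝ) (hIo : IsOpen I) (hIc : I.OrdConnected)
    (g1 g2 : ℝ → ℝ)
    (hg1c : ContinuousOn g1 I) (hg2c : ContinuousOn g2 I)
    (hmono : (StrictMonoOn g1 I ∧ StrictMonoOn g2 I) ∨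
             (StrictAntiOn g1 I ∧ StrictAntiOn g2 I))
    (a b : ℝ) (hab : a < b) (hUI : Set.Ioo a b ⊆ I) (x : ℝ) (hx : x ∈ I) :
    ((x < a → (Uset1 g1 g2 (Set.Ioo a b) x).Nonempty →
        ∀ u ∈ Set.Icc x a, Uset1 g1 g2 (Set.Ioo a b) x ⊆ Uset1 g1 g2 (Set.Ioo a b) u) ∧
     (b < x → (Uset1 g1 g2 (Set.Ioo a b) x).Nonempty →
        ∀ u ∈ Set.Icc b x, Uset1 g1 g2 (Set.Ioo a b) x ⊆ Uset1 g1 g2 (Set.Ioo a b) u)) ∧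
    ((x < a → (Uset1 g1 g2 (Set.Ioo a b) x).Nonempty →
        a < sInf (Uset1 g1 g2 (Set.Ioo a b) x) ∧ sSup (Uset1 g1 g2 (Set.Ioo a b) x) = b) ∧
     (b < x → (Uset1 g1 g2 (Set.Ioo a b) x).Nonempty →
        sSup (Uset1 g1 g2 (Set.Ioo a b) x) < b ∧ sInf (Uset1 g1 g2 (Set.Ioo a b) x) = a)) := by
  have hSoc : (g1 '' Set.Ioo a b + g2 '' Set.Ioo a b).OrdConnected :=
    sumset_ordConnected g1 g2 hg1c hg2c a b hUI
  have hmU : (a + b) / 2 ∈ Set.Ioo a b := ⟨by linarith, by linarith⟩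
  have hmI : (a + b) / 2 ∈ I := hUI hmU
  have haI : x < a → a ∈ I := fun h => hIc.out hx hmI ⟨h.le, by linarith⟩
  have hbI : b < x → b ∈ I := fun h => hIc.out hmI hx ⟨by linarith, h.le⟩
  have hself : ∀ z ∈ Set.Ioo a b, g1 z + g2 z ∈ g1 '' Set.Ioo a b + g2 '' Set.Ioo a b :=
    fun z hz => Set.add_mem_add ⟨z, hz, rfl⟩ ⟨z, hz, rfl⟩
  refine ⟨⟨?_, ?_⟩, ?_, ?_⟩
  · -- (i) left
    rintro hxa - u ⟨hxu, hua⟩ y ⟨hyU, hyS⟩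
    have hyI : y ∈ I := hUI hyU
    have huI : u ∈ I := hIc.out hx (haI hxa) ⟨hxu, hua⟩
    refine ⟨hyU, hSoc.uIcc_subset hyS (hself y hyU) ?_⟩
    have huy : u ≤ y := hua.trans hyU.1.le
    rcases hmono with ⟨h1, -⟩ | ⟨h1, -⟩
    · exact Set.mem_uIcc.2 (Or.inl ⟨by have := h1.monotoneOn hx huI hxu; linarith,
        by have := h1.monotoneOn huI hyI huy; linarith⟩)
    · exact Set.mem_uIcc.2 (Or.inr ⟨by have := h1.antitoneOn huI hyI huy; linarith,
        by have := h1.antitoneOn hx huI hxu; linarith⟩)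
  · -- (i) right
    rintro hbx - u ⟨hbu, hux⟩ y ⟨hyU, hyS⟩
    have hyI : y ∈ I := hUI hyU
    have huI : u ∈ I := hIc.out (hbI hbx) hx ⟨hbu, hux⟩
    refine ⟨hyU, hSoc.uIcc_subset hyS (hself y hyU) ?_⟩
    have hyu : y ≤ u := hyU.2.le.trans hbu
    rcases hmono with ⟨h1, -⟩ | ⟨h1, -⟩
    · exact Set.mem_uIcc.2 (Or.inr ⟨by have := h1.monotoneOn hyI huI hyu; linarith,
        by have := h1.monotoneOn huI hx hux; linarith⟩)
    · exact Set.mem_uIcc.2 (Or.inl ⟨by have := h1.antitoneOn huI hx hux; linarith,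
        by have := h1.antitoneOn hyI huI hyu; linarith⟩)
  · -- (ii) left
    intro hxa hne
    obtain ⟨y0, hy0U, hy0S⟩ := hne
    have haI' : a ∈ I := haI hxa
    have hay0 : a < y0 := hy0U.1
    have hy0I : y0 ∈ I := hUI hy0U
    constructor
    · -- a < sInf
      have hδ : (0:ℝ) < |g1 a - g1 x| := by
        rcases hmono with ⟨h1, -⟩ | ⟨h1, -⟩
        · have := h1 hx haI' hxa; rw [abs_of_pos (by linarith)]; linarith
        · have := h1 hx haI' hxa; rw [abs_of_neg (by linarith)]; linarith
      have hT : ∀ y, y ∈ Uset1 g1 g2 (Set.Ioo a b) x → |g1 a - g1 x| ≤ |g2 y - g2 a| := by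
        rintro y ⟨hyU, hyS⟩
        obtain ⟨p', ⟨p, hpU, rfl⟩, q', ⟨q, hqU, rfl⟩, hpq⟩ := Set.mem_add.1 hyS
        rcases hmono with ⟨h1, h2⟩ | ⟨h1, h2⟩
        · have hp := h1 haI' (hUI hpU) hpU.1
          have hq := h2 haI' (hUI hqU) hqU.1
          have hxa' := h1 hx haI' hxa
          calc |g1 a - g1 x| = g1 a - g1 x := abs_of_pos (by linarith)
            _ ≤ g2 y - g2 a := by linarith
            _ ≤ |g2 y - g2 a| := le_abs_self _
        · have hp := h1 haI' (hUI hpU) hpU.1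
          have hq := h2 haI' (hUI hqU) hqU.1
          have hxa' := h1 hx haI' hxa
          calc |g1 a - g1 x| = -(g1 a - g1 x) := abs_of_neg (by linarith)
            _ ≤ -(g2 y - g2 a) := by linarith
            _ ≤ |g2 y - g2 a| := neg_le_abs _
      have hc : ContinuousAt g2 a := hg2c.continuousAt (hIo.mem_nhds haI')
      obtain ⟨ε, hε, hball⟩ := Metric.continuousAt_iff.1 hc _ hδ
      have hlb : ∀ y ∈ Uset1 g1 g2 (Set.Ioo a b) x, a + ε ≤ y := by
        rintro y hy
        by_contra hlt
        push_neg at hlt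
        have hya : a < y := hy.1.1
        have hd : dist y a < ε := by rw [Real.dist_eq, abs_of_pos (by linarith)]; linarith
        have := hball hd
        rw [Real.dist_eq] at this
        have := hT y hy
        linarith
      calc a < a + ε := by linarith
        _ ≤ sInf (Uset1 g1 g2 (Set.Ioo a b) x) := le_csInf ⟨y0, hy0U, hy0S⟩ hlb
    · -- sSup = b
      have hsub : Set.Ico y0 b ⊆ Uset1 g1 g2 (Set.Ioo a b) x := by
        rintro z ⟨hy0z, hzb⟩
        have hzU : z ∈ Set.Ioo a b := ⟨lt_of_lt_of_le hay0 hy0z, hzb⟩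
        have hzI : z ∈ I := hUI hzU
        refine ⟨hzU, hSoc.uIcc_subset (hself z hzU) hy0S ?_⟩
        rcases hmono with ⟨h1, h2⟩ | ⟨h1, h2⟩
        · have hxz := h1 hx hzI (by linarith [hzU.1] : x < z)
          have := h2.monotoneOn hy0I hzI hy0z
          exact Set.mem_uIcc.2 (Or.inr ⟨by linarith, by linarith⟩)
        · have hxz := h1 hx hzI (by linarith [hzU.1] : x < z)
          have := h2.antitoneOn hy0I hzI hy0z
          exact Set.mem_uIcc.2 (Or.inl ⟨by linarith, by linarith⟩)
      have hbdd : BddAbove (Uset1 g1 g2 (Set.Ioo a b) x) := ⟨b, fun y hy => hy.1.2.le⟩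
      have h1 : sSup (Uset1 g1 g2 (Set.Ioo a b) x) ≤ b :=
        csSup_le ⟨y0, hy0U, hy0S⟩ (fun y hy => hy.1.2.le)
      have h2 : b ≤ sSup (Uset1 g1 g2 (Set.Ioo a b) x) := by
        have h3 : sSup (Set.Ico y0 b) ≤ sSup (Uset1 g1 g2 (Set.Ioo a b) x) :=
          csSup_le_csSup hbdd ⟨y0, le_refl y0, hy0U.2⟩ hsub
        rwa [csSup_Ico hy0U.2] at h3
      linarith
  · -- (ii) right
    intro hbx hne
    obtain ⟨y0, hy0U, hy0S⟩ := hne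
    have hbI' : b ∈ I := hbI hbx
    have hy0b : y0 < b := hy0U.2
    have hy0I : y0 ∈ I := hUI hy0U
    constructor
    · -- sSup < b
      have hδ : (0:ℝ) < |g1 b - g1 x| := by
        rcases hmono with ⟨h1, -⟩ | ⟨h1, -⟩
        · have := h1 hbI' hx hbx; rw [abs_of_neg (by linarith)]; linarith
        · have := h1 hbI' hx hbx; rw [abs_of_pos (by linarith)]; linarith
      have hT : ∀ y, y ∈ Uset1 g1 g2 (Set.Ioo a b) x → |g1 b - g1 x| ≤ |g2 y - g2 b| := by
        rintro y ⟨hyU, hyS⟩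
        obtain ⟨p', ⟨p, hpU, rfl⟩, q', ⟨q, hqU, rfl⟩, hpq⟩ := Set.mem_add.1 hyS
        rcases hmono with ⟨h1, h2⟩ | ⟨h1, h2⟩
        · have hp := h1 (hUI hpU) hbI' hpU.2
          have hq := h2 (hUI hqU) hbI' hqU.2
          have hxb' := h1 hbI' hx hbx
          calc |g1 b - g1 x| = -(g1 b - g1 x) := abs_of_neg (by linarith)
            _ ≤ -(g2 y - g2 b) := by linarith
            _ ≤ |g2 y - g2 b| := neg_le_abs _
        · have hp := h1 (hUI hpU) hbI' hpU.2
          have hq := h2 (hUI hqU) hbI' hqU.2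
          have hxb' := h1 hbI' hx hbx
          calc |g1 b - g1 x| = g1 b - g1 x := abs_of_pos (by linarith)
            _ ≤ g2 y - g2 b := by linarith
            _ ≤ |g2 y - g2 b| := le_abs_self _
      have hc : ContinuousAt g2 b := hg2c.continuousAt (hIo.mem_nhds hbI')
      obtain ⟨ε, hε, hball⟩ := Metric.continuousAt_iff.1 hc _ hδ
      have hub : ∀ y ∈ Uset1 g1 g2 (Set.Ioo a b) x, y ≤ b - ε := by
        rintro y hy
        by_contra hlt
        push_neg at hlt
        have hyb : y < b := hy.1.2
        have hd : dist y b < ε := by rw [Real.dist_eq, abs_of_neg (by linarith)]; linarith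
        have := hball hd
        rw [Real.dist_eq] at this
        have := hT y hy
        linarith
      calc sSup (Uset1 g1 g2 (Set.Ioo a b) x) ≤ b - ε := csSup_le ⟨y0, hy0U, hy0S⟩ hub
        _ < b := by linarith
    · -- sInf = a
      have hsub : Set.Ioc a y0 ⊆ Uset1 g1 g2 (Set.Ioo a b) x := by
        rintro z ⟨haz, hzy0⟩
        have hzU : z ∈ Set.Ioo a b := ⟨haz, lt_of_le_of_lt hzy0 hy0b⟩
        have hzI : z ∈ I := hUI hzU
        refine ⟨hzU, hSoc.uIcc_subset (hself z hzU) hy0S ?_⟩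
        rcases hmono with ⟨h1, h2⟩ | ⟨h1, h2⟩
        · have hzx := h1 hzI hx (by linarith [hzU.2] : z < x)
          have := h2.monotoneOn hzI hy0I hzy0
          exact Set.mem_uIcc.2 (Or.inl ⟨by linarith, by linarith⟩)
        · have hzx := h1 hzI hx (by linarith [hzU.2] : z < x)
          have := h2.antitoneOn hzI hy0I hzy0
          exact Set.mem_uIcc.2 (Or.inr ⟨by linarith, by linarith⟩)
      have hbdd : BddBelow (Uset1 g1 g2 (Set.Ioo a b) x) := ⟨a, fun y hy => hy.1.1.le⟩
      have h1 : a ≤ sInf (Uset1 g1 g2 (Set.Ioo a b) x) :=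
        le_csInf ⟨y0, hy0U, hy0S⟩ (fun y hy => hy.1.1.le)
      have h2 : sInf (Uset1 g1 g2 (Set.Ioo a b) x) ≤ a := by
        have h3 : sInf (Uset1 g1 g2 (Set.Ioo a b) x) ≤ sInf (Set.Ioc a y0) :=
          csInf_le_csInf hbdd ⟨y0, hy0U.1, le_refl y0⟩ hsub
        rwa [csInf_Ioc hy0U.1] at h3
      linarith

/-- Parts (3) and (4) of Lemma 1: with `U = (a,b) ⊆ I` and `k ∈ {1,2}`,
(i) if `x ∈ I`, `x < a` and `U_k(x) ≠ ∅` then `U_k(x) ⊆ U_k(u)` for all `u ∈ [x,a]`,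
and similarly for `b < x` with `u ∈ [b,x]`;
(ii) if `x ∈ I`, `x < a` and `U_k(x) ≠ ∅` then `a < inf U_k(x)` and `sup U_k(x) = b`,
and similarly if `b < x` then `sup U_k(x) < b` and `inf U_k(x) = a`. -/
theorem stmt3
    (I : Set ℝ) (hIo : IsOpen I) (hIc : I.OrdConnected) (hIne : I.Nonempty)
    (g1 g2 : ℝ → ℝ)
    (hg1c : ContinuousOn g1 I) (hg2c : ContinuousOn g2 I)
    (hmono : (StrictMonoOn g1 I ∧ StrictMonoOn g2 I) ∨
             (StrictAntiOn g1 I ∧ StrictAntiOn g2 I))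
    (a b : ℝ) (hab : a < b) (hUI : Set.Ioo a b ⊆ I) :
    ∀ x ∈ I,
      ((x < a → (Uset1 g1 g2 (Set.Ioo a b) x).Nonempty →
        ∀ u ∈ Set.Icc x a, Uset1 g1 g2 (Set.Ioo a b) x ⊆ Uset1 g1 g2 (Set.Ioo a b) u) ∧
       (x < a → (Uset2 g1 g2 (Set.Ioo a b) x).Nonempty →
        ∀ u ∈ Set.Icc x a, Uset2 g1 g2 (Set.Ioo a b) x ⊆ Uset2 g1 g2 (Set.Ioo a b) u) ∧
       (b < x → (Uset1 g1 g2 (Set.Ioo a b) x).Nonempty →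
        ∀ u ∈ Set.Icc b x, Uset1 g1 g2 (Set.Ioo a b) x ⊆ Uset1 g1 g2 (Set.Ioo a b) u) ∧
       (b < x → (Uset2 g1 g2 (Set.Ioo a b) x).Nonempty →
        ∀ u ∈ Set.Icc b x, Uset2 g1 g2 (Set.Ioo a b) x ⊆ Uset2 g1 g2 (Set.Ioo a b) u)) ∧
      ((x < a → (Uset1 g1 g2 (Set.Ioo a b) x).Nonempty →
        a < sInf (Uset1 g1 g2 (Set.Ioo a b) x) ∧ sSup (Uset1 g1 g2 (Set.Ioo a b) x) = b) ∧
       (x < a → (Uset2 g1 g2 (Set.Ioo a b) x).Nonempty →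
        a < sInf (Uset2 g1 g2 (Set.Ioo a b) x) ∧ sSup (Uset2 g1 g2 (Set.Ioo a b) x) = b) ∧
       (b < x → (Uset1 g1 g2 (Set.Ioo a b) x).Nonempty →
        sSup (Uset1 g1 g2 (Set.Ioo a b) x) < b ∧ sInf (Uset1 g1 g2 (Set.Ioo a b) x) = a) ∧
       (b < x → (Uset2 g1 g2 (Set.Ioo a b) x).Nonempty →
        sSup (Uset2 g1 g2 (Set.Ioo a b) x) < b ∧ sInf (Uset2 g1 g2 (Set.Ioo a b) x) = a)) := by
  intro x hx
  have hmono' : (StrictMonoOn g2 I ∧ StrictMonoOn g1 I) ∨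
      (StrictAntiOn g2 I ∧ StrictAntiOn g1 I) := hmono.imp And.symm And.symm
  obtain ⟨⟨K1l, K1r⟩, K1li, K1ri⟩ := key I hIo hIc g1 g2 hg1c hg2c hmono a b hab hUI x hx
  obtain ⟨⟨K2l, K2r⟩, K2li, K2ri⟩ := key I hIo hIc g2 g1 hg2c hg1c hmono' a b hab hUI x hx
  simp only [Uset2_eq]
  exact ⟨⟨K1l, K2l, K1r, K2r⟩, K1li, K2li, K1ri, K2ri⟩
end

section
/- Let I ⊆ ℝ be a nonempty open interval, let F : I → ℝ be affine on I, and let g1, g2 : I → ℝ be continuous functions strictly monotone in the same sense. Then (F,f1,f2,G,g1,g2) solves equation (1) if and only if there exist an additive function B : ℝ → ℝ and constants λ1, λ2 ∈ ℝ such that f_k(x) = -F(x)/2 + B(g_k(x)) + λ_k for all x ∈ I and k ∈ {1,2}, and G(u) = B(u) + λ1 + λ2 for all u ∈ g1(I)+g2(I). -/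
/-! Writing `ψₖ (gₖ x) = fₖ x + F x / 2` (possible as `gₖ` is injective) and using
`F ((x + y) / 2) = (F x + F y) / 2`, equation (1) becomes Pexider's equation
`ψ1 u + ψ2 v = G (u + v)` on the nondegenerate intervals `g1 '' I` and `g2 '' I`.
There the increment `ψₖ (u + t) - ψₖ u` is, for small `|t|`, a locally additive function
`θ t` independent of `u` and `k`; it extends to an additive `B` via `B x = n * θ (x / n)`
for large `n`, and then `ψₖ - B` is locally, hence by connectedness globally, constant. -/

open Set Pointwise

/-- `h` is affine on `U`: it satisfies Jensen's equation on `U`. -/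
def AffineOn (h : ℝ → ℝ) (U : Set ℝ) : Prop :=
  ∀ u ∈ U, ∀ v ∈ U, h ((u + v) / 2) = (h u + h v) / 2

theorem IsPreconnected.apply_eq_of_forall_dist_lt {α β : Type*} [PseudoMetricSpace α]
    {s : Set α} (hs : IsPreconnected s) {f : α → β} {δ : ℝ} (hδ : 0 < δ)
    (hf : ∀ x ∈ s, ∀ y ∈ s, dist x y < δ → f x = f y) {x y : α} (hx : x ∈ s) (hy : y ∈ s) :
    f x = f y := by
  have := isPreconnected_iff_preconnectedSpace.mp hs
  have hloc : IsLocallyConstant (f ∘ ((↑) : s → α)) :=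
    (IsLocallyConstant.iff_eventually_eq _).mpr fun x =>
      Metric.eventually_nhds_iff.mpr ⟨δ, hδ, fun y hy => hf _ y.2 _ x.2 hy⟩
  exact hloc.apply_eq_of_preconnectedSpace ⟨x, hx⟩ ⟨y, hy⟩

section LocallyAdditive

variable {θ : ℝ → ℝ} {ε : ℝ}

theorem map_natCast_mul_of_locally_additive
    (hθ : ∀ s t, |s| ≤ ε → |t| ≤ ε → θ (s + t) = θ s + θ t) (hε : 0 ≤ ε) :
    ∀ (n : ℕ) (s : ℝ), n * |s| ≤ ε → θ (n * s) = n * θ s := by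
  intro n
  induction n with
  | zero =>
    intro s _
    simpa using hθ 0 0 (by simpa using hε) (by simpa using hε)
  | succ n ih =>
    intro s hs
    push_cast at hs ⊢
    have hs1 : |s| ≤ ε := by nlinarith [abs_nonneg s, (n.cast_nonneg : (0 : ℝ) ≤ n)]
    have hsn : (n : ℝ) * |s| ≤ ε := by nlinarith [abs_nonneg s]
    have hns : |(n : ℝ) * s| ≤ ε := by rwa [abs_mul, Nat.abs_cast]
    rw [add_mul, one_mul, hθ _ _ hns hs1, ih s hsn]
    ring

theorem natCast_mul_div_eq_of_locally_additive
    (hθ : ∀ s t, |s| ≤ ε → |t| ≤ ε → θ (s + t) = θ s + θ t) (hε : 0 ≤ ε)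
    {x : ℝ} {m n : ℕ} (hm : 0 < m) (hn : 0 < n) (hxm : |x| ≤ m * ε) (hxn : |x| ≤ n * ε) :
    m * θ (x / m) = n * θ (x / n) := by
  have hθn := map_natCast_mul_of_locally_additive hθ hε
  have hm' : (0 : ℝ) < m := Nat.cast_pos.mpr hm
  have hn' : (0 : ℝ) < n := Nat.cast_pos.mpr hn
  have key : ∀ {a b : ℝ}, 0 < a → 0 < b → |x| ≤ a * ε → b * |x / (a * b)| ≤ ε := by
    intro a b ha hb hx
    rw [abs_div, abs_of_pos (mul_pos ha hb), mul_div_assoc', div_le_iff₀ (mul_pos ha hb)]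
    nlinarith
  rw [show x / m = n * (x / (m * n)) by field_simp, hθn n _ (key hm' hn' hxm),
    show x / n = m * (x / (n * m)) by field_simp, hθn m _ (key hn' hm' hxn), mul_comm (n : ℝ) m]
  ring

theorem exists_addMonoidHom_eq_of_locally_additive (hε : 0 < ε)
    (hθ : ∀ s t, |s| ≤ ε → |t| ≤ ε → θ (s + t) = θ s + θ t) :
    ∃ B : ℝ →+ ℝ, ∀ t, |t| ≤ ε → B t = θ t := by
  set N : ℝ → ℕ := fun x => ⌈|x| / ε⌉₊ + 1
  have hN : ∀ x, 0 < N x := fun x => Nat.succ_pos _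
  have hxN : ∀ x, |x| ≤ N x * ε := fun x => by
    rw [← div_le_iff₀ hε]
    exact (Nat.le_ceil _).trans (by simp [N])
  have hB : ∀ x (n : ℕ), 0 < n → |x| ≤ n * ε → N x * θ (x / N x) = n * θ (x / n) :=
    fun x n hn hxn => natCast_mul_div_eq_of_locally_additive hθ hε.le (hN x) hn (hxN x) hxn
  refine ⟨AddMonoidHom.mk' (fun x => N x * θ (x / N x)) fun s t => ?_, fun t ht => ?_⟩
  · set n := N s + N t + N (s + t)
    have hn0 : 0 < n := Nat.add_pos_right _ (hN _)
    have hn : (0 : ℝ) < n := Nat.cast_pos.mpr hn0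
    have hle : ∀ x, N x ≤ n → |x| ≤ n * ε := fun x hx =>
      (hxN x).trans (mul_le_mul_of_nonneg_right (by exact_mod_cast hx) hε.le)
    have small : ∀ x, N x ≤ n → |x / n| ≤ ε := fun x hx => by
      rw [abs_div, Nat.abs_cast, div_le_iff₀ hn, mul_comm]; exact hle x hx
    rw [hB _ n hn0 (hle _ (by omega)), hB s n hn0 (hle _ (by omega)),
      hB t n hn0 (hle _ (by omega)), add_div, hθ _ _ (small s (by omega)) (small t (by omega))]
    ring
  · simpa using hB t 1 one_pos (by simpa using ht)

end LocallyAdditive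

theorem Set.OrdConnected.exists_forall_abs_le {J : Set ℝ} (hJ : J.OrdConnected)
    (hJ' : J.Nontrivial) : ∃ a δ, 0 < δ ∧ ∀ t, |t| ≤ δ → a + t ∈ J := by
  obtain ⟨p, hp, q, hq, hpq⟩ := hJ'.exists_lt
  refine ⟨(p + q) / 2, (q - p) / 2, by linarith, fun t ht => hJ.out hp hq ?_⟩
  rw [abs_le] at ht
  constructor <;> linarith

def HasLocalIncrements (ψ θ : ℝ → ℝ) (J : Set ℝ) (δ : ℝ) : Prop :=
  ∀ u ∈ J, ∀ t, |t| ≤ δ → u + t ∈ J → ψ (u + t) - ψ u = θ t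

namespace HasLocalIncrements

variable {ψ θ : ℝ → ℝ} {J : Set ℝ} {δ : ℝ}

theorem mono {θ' : ℝ → ℝ} {ε : ℝ} (h : HasLocalIncrements ψ θ J δ) (hεδ : ε ≤ δ)
    (hθ : ∀ t, |t| ≤ ε → θ' t = θ t) : HasLocalIncrements ψ θ' J ε :=
  fun u hu t ht hut => (h u hu t (ht.trans hεδ) hut).trans (hθ t ht).symm

theorem map_add {a : ℝ} (h : HasLocalIncrements ψ θ J δ) (ha : ∀ t, |t| ≤ δ → a + t ∈ J)
    (s t : ℝ) (hs : |s| ≤ δ / 2) (ht : |t| ≤ δ / 2) : θ (s + t) = θ s + θ t := by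
  have hδ : 0 ≤ δ := by linarith [abs_nonneg s]
  have ha0 : a ∈ J := by simpa using ha 0 (by simpa using hδ)
  have hst : |s + t| ≤ δ := (abs_add_le s t).trans (by linarith)
  have has : a + s ∈ J := ha s (hs.trans (half_le_self hδ))
  have e1 := h a ha0 _ hst (ha _ hst)
  have e2 := h a ha0 s (hs.trans (half_le_self hδ)) has
  have e3 := h (a + s) has t (ht.trans (half_le_self hδ)) (by rw [add_assoc]; exact ha _ hst)
  rw [add_assoc] at e3
  linarith

theorem eq_map_add_const {a : ℝ} {B : ℝ →+ ℝ} (h : HasLocalIncrements ψ B J δ)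
    (hJ : IsPreconnected J) (hδ : 0 < δ) (ha : a ∈ J) : ∀ u ∈ J, ψ u = B u + (ψ a - B a) := by
  intro u hu
  have : ψ u - B u = ψ a - B a := by
    refine hJ.apply_eq_of_forall_dist_lt (f := fun x => ψ x - B x) hδ
      (fun x hx y hy hxy => ?_) hu ha
    rw [Real.dist_eq] at hxy
    have e := h y hy (x - y) hxy.le (by rwa [add_sub_cancel])
    rw [add_sub_cancel, map_sub] at e
    linarith
  linarith

end HasLocalIncrements

theorem exists_addMonoidHom_of_pexider {J1 J2 : Set ℝ} (hJ1 : J1.OrdConnected)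
    (hJ2 : J2.OrdConnected) (hJ1' : J1.Nontrivial) (hJ2' : J2.Nontrivial) {ψ1 ψ2 G : ℝ → ℝ}
    (h : ∀ u ∈ J1, ∀ v ∈ J2, ψ1 u + ψ2 v = G (u + v)) :
    ∃ B : ℝ →+ ℝ, ∃ c1 c2 : ℝ, (∀ u ∈ J1, ψ1 u = B u + c1) ∧ (∀ v ∈ J2, ψ2 v = B v + c2) ∧
      ∀ w ∈ J1 + J2, G w = B w + c1 + c2 := by
  obtain ⟨a, δ1, hδ1, ha⟩ := hJ1.exists_forall_abs_le hJ1'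
  obtain ⟨b, δ2, hδ2, hb⟩ := hJ2.exists_forall_abs_le hJ2'
  have ha0 : a ∈ J1 := by simpa using ha 0 (by simpa using hδ1.le)
  have hb0 : b ∈ J2 := by simpa using hb 0 (by simpa using hδ2.le)
  set δ := min δ1 δ2
  have hδ : 0 < δ := lt_min hδ1 hδ2
  set θ : ℝ → ℝ := fun t => ψ2 (b + t) - ψ2 b
  -- Both `ψ1 (u + t) + ψ2 b` and `ψ1 u + ψ2 (b + t)` equal `G (u + b + t)`.
  have inc1 : HasLocalIncrements ψ1 θ J1 δ := by
    intro u hu t ht hut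
    have e1 := h _ hut b hb0
    have e2 := h u hu _ (hb t (ht.trans (min_le_right _ _)))
    rw [show u + (b + t) = u + t + b by ring] at e2
    simp only [θ]
    linarith
  have inc2 : HasLocalIncrements ψ2 θ J2 δ := by
    intro v hv t ht hvt
    have hat : a + t ∈ J1 := ha t (ht.trans (min_le_left _ _))
    have e1 := h _ hat v hv
    have e2 := h a ha0 _ hvt
    have e3 := inc1 a ha0 t ht hat
    rw [show a + (v + t) = a + t + v by ring] at e2
    linarith
  obtain ⟨B, hB⟩ : ∃ B : ℝ →+ ℝ, ∀ t, |t| ≤ δ / 2 → B t = θ t :=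
    exists_addMonoidHom_eq_of_locally_additive (half_pos hδ)
      (inc1.map_add fun t ht => ha t (ht.trans (min_le_left _ _)))
  have h1 := (inc1.mono (half_le_self hδ.le) hB).eq_map_add_const hJ1.isPreconnected
    (half_pos hδ) ha0
  have h2 := (inc2.mono (half_le_self hδ.le) hB).eq_map_add_const hJ2.isPreconnected
    (half_pos hδ) hb0
  refine ⟨B, ψ1 a - B a, ψ2 b - B b, h1, h2, ?_⟩
  rintro _ ⟨u, hu, v, hv, rfl⟩
  rw [← h u hu v hv, h1 u hu, h2 v hv, map_add]
  ring

theorem exists_addMonoidHom_of_pexider_comp {I1 I2 : Set ℝ} {g1 g2 φ1 φ2 G : ℝ → ℝ}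
    (hJ1 : (g1 '' I1).OrdConnected) (hJ2 : (g2 '' I2).OrdConnected)
    (hJ1' : (g1 '' I1).Nontrivial) (hJ2' : (g2 '' I2).Nontrivial)
    (hg1 : InjOn g1 I1) (hg2 : InjOn g2 I2)
    (h : ∀ x ∈ I1, ∀ y ∈ I2, φ1 x + φ2 y = G (g1 x + g2 y)) :
    ∃ B : ℝ →+ ℝ, ∃ c1 c2 : ℝ, (∀ x ∈ I1, φ1 x = B (g1 x) + c1) ∧
      (∀ y ∈ I2, φ2 y = B (g2 y) + c2) ∧ ∀ w ∈ g1 '' I1 + g2 '' I2, G w = B w + c1 + c2 := by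
  obtain ⟨B, c1, c2, h1, h2, hG⟩ := exists_addMonoidHom_of_pexider hJ1 hJ2 hJ1' hJ2'
    (ψ1 := φ1 ∘ Function.invFunOn g1 I1) (ψ2 := φ2 ∘ Function.invFunOn g2 I2) (G := G) (by
      rintro _ ⟨x, hx, rfl⟩ _ ⟨y, hy, rfl⟩
      simpa [hg1.leftInvOn_invFunOn hx, hg2.leftInvOn_invFunOn hy] using h x hx y hy)
  refine ⟨B, c1, c2, fun x hx => ?_, fun y hy => ?_, hG⟩
  · simpa [hg1.leftInvOn_invFunOn hx] using h1 _ (mem_image_of_mem g1 hx)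
  · simpa [hg2.leftInvOn_invFunOn hy] using h2 _ (mem_image_of_mem g2 hy)

theorem solvesEq1_iff_of_affineOn {I : Set ℝ} {F f1 f2 G g1 g2 : ℝ → ℝ} (hF : AffineOn F I) :
    SolvesEq1 I F f1 f2 G g1 g2 ↔
      ∀ x ∈ I, ∀ y ∈ I, (f1 x + F x / 2) + (f2 y + F y / 2) = G (g1 x + g2 y) := by
  refine forall₂_congr fun x hx => forall₂_congr fun y hy => ?_
  rw [hF x hx y hy]
  constructor <;> intro h <;> linarith

/-- If `F` is affine on `I` and `g1, g2` are continuous and strictly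
monotone in the same sense, then `(F,f1,f2,G,g1,g2)` solves equation (1) if and only if
there exist an additive `B : ℝ → ℝ` and constants `λ1, λ2 ∈ ℝ` such that
`f_k = -F/2 + B ∘ g_k + λ_k` on `I` and `G = B + λ1 + λ2` on `g1(I) + g2(I)`. -/
theorem stmt5
    (I : Set ℝ) (hIo : IsOpen I) (hIc : I.OrdConnected) (hIne : I.Nonempty)
    (F f1 f2 G g1 g2 : ℝ → ℝ)
    (hFaff : AffineOn F I)
    (hg1c : ContinuousOn g1 I) (hg2c : ContinuousOn g2 I)
    (hmono : (StrictMonoOn g1 I ∧ StrictMonoOn g2 I) ∨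
             (StrictAntiOn g1 I ∧ StrictAntiOn g2 I)) :
    SolvesEq1 I F f1 f2 G g1 g2 ↔
      ∃ B : ℝ → ℝ, (∀ s t : ℝ, B (s + t) = B s + B t) ∧
        ∃ lam1 lam2 : ℝ,
          (∀ x ∈ I, f1 x = -F x / 2 + B (g1 x) + lam1 ∧
                    f2 x = -F x / 2 + B (g2 x) + lam2) ∧
          (∀ w ∈ g1 '' I + g2 '' I, G w = B w + lam1 + lam2) := by
  obtain ⟨hinj1, hinj2⟩ : InjOn g1 I ∧ InjOn g2 I :=
    hmono.elim (fun h => ⟨h.1.injOn, h.2.injOn⟩) fun h => ⟨h.1.injOn, h.2.injOn⟩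
  obtain ⟨x0, hx0⟩ := hIne
  have hI : I.Nontrivial := (infinite_of_mem_nhds x0 (hIo.mem_nhds hx0)).nontrivial
  rw [solvesEq1_iff_of_affineOn hFaff]
  constructor
  · intro h
    obtain ⟨B, c1, c2, h1, h2, hG⟩ := exists_addMonoidHom_of_pexider_comp
      (hIc.isPreconnected.image g1 hg1c).ordConnected
      (hIc.isPreconnected.image g2 hg2c).ordConnected
      (hI.image_of_injOn hinj1) (hI.image_of_injOn hinj2) hinj1 hinj2 h
    exact ⟨B, map_add B, c1, c2, fun x hx => ⟨by linarith [h1 x hx], by linarith [h2 x hx]⟩, hG⟩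
  · rintro ⟨B, hB, c1, c2, hf, hG⟩ x hx y hy
    rw [hG _ (add_mem_add (mem_image_of_mem g1 hx) (mem_image_of_mem g2 hy)), hB,
      (hf x hx).1, (hf y hy).2]
    ring
end

section
/- Let I ⊆ ℝ be a nonempty open interval, U ⊆ I a nonempty open subinterval, μ1, μ2 ∈ ℝ, and D : ℝ → ℝ an invertible additive function. Suppose g1, g2 : I → ℝ satisfy g_k(x) = D(x) + μ_k for all x ∈ U and k ∈ {1,2}. If (F,f1,f2,G,g1,g2) solves equation (1), then there exist an additive function C : ℝ → ℝ and constants λ1, λ2 ∈ ℝ such that f_k(x) = C(x) + λ_k for all x ∈ U and k ∈ {1,2}, and G(u) = F(D^{-1}(u−μ)/2) + C(D^{-1}(u−μ)) + λ1 + λ2 for all u ∈ g1(U)+g2(U), where μ := μ1 + μ2. -/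
open Set Pointwise

lemma extend_additive (M : ℝ → ℝ) (ε : ℝ) (hε : 0 < ε)
    (hM : ∀ s t : ℝ, |s| < ε → |t| < ε → M (s + t) = M s + M t) :
    ∃ C : ℝ → ℝ, (∀ s t : ℝ, C (s + t) = C s + C t) ∧ ∀ t : ℝ, |t| < ε → C t = M t := by
  have hM0 : M 0 = 0 := by
    have h := hM 0 0 (by simpa using hε) (by simpa using hε)
    simp only [add_zero] at h
    linarith
  have hiter : ∀ (n : ℕ) (t : ℝ), |(n : ℝ) * t| < ε → M ((n : ℝ) * t) = n * M t := by
    intro n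
    induction n with
    | zero => intro t _; simpa using hM0
    | succ n ih =>
      intro t h
      have hc : |((n : ℝ) + 1) * t| = ((n : ℝ) + 1) * |t| := by
        rw [abs_mul, abs_of_nonneg (by positivity)]
      push_cast at h ⊢
      rw [hc] at h
      have hn0 : (0:ℝ) ≤ (n:ℝ) := Nat.cast_nonneg n
      have ht : |t| < ε := by nlinarith [abs_nonneg t]
      have hnt : |(n : ℝ) * t| < ε := by
        rw [abs_mul, abs_of_nonneg hn0]; nlinarith [abs_nonneg t]
      rw [show ((n : ℝ) + 1) * t = (n : ℝ) * t + t by ring, hM _ _ hnt ht, ih t hnt]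
      ring
  set N : ℝ → ℕ := fun x => ⌊|x| / ε⌋₊ + 1 with hNdef
  have hNpos : ∀ x : ℝ, (0 : ℝ) < (N x : ℝ) := by intro x; positivity
  have hNbig : ∀ x : ℝ, |x| < ε * (N x : ℝ) := by
    intro x
    have h := Nat.lt_floor_add_one (|x| / ε)
    rw [div_lt_iff₀ hε] at h
    have : ((N x : ℕ) : ℝ) = (⌊|x| / ε⌋₊ : ℝ) + 1 := by simp [hNdef]
    rw [this]; linarith
  have hNsmall : ∀ x : ℝ, |x / (N x : ℝ)| < ε := by
    intro x
    rw [abs_div, abs_of_pos (hNpos x), div_lt_iff₀ (hNpos x)]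
    linarith [hNbig x]
  have key : ∀ (x : ℝ) (n m : ℕ), 0 < n → 0 < m → |x / (n : ℝ)| < ε → |x / (m : ℝ)| < ε →
      (n : ℝ) * M (x / n) = (m : ℝ) * M (x / m) := by
    have half : ∀ (x : ℝ) (n m : ℕ), 0 < n → 0 < m → |x / (n : ℝ)| < ε →
        (n : ℝ) * M (x / n) = ((n * m : ℕ) : ℝ) * M (x / ((n * m : ℕ) : ℝ)) := by
      intro x n m hn hm hsx
      have hn0 : ((n : ℕ) : ℝ) ≠ 0 := by positivity
      have hm0 : ((m : ℕ) : ℝ) ≠ 0 := by positivity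
      have hx : (m : ℝ) * (x / ((n * m : ℕ) : ℝ)) = x / n := by
        push_cast; field_simp
      have := hiter m (x / ((n * m : ℕ) : ℝ)) (by rw [hx]; exact hsx)
      rw [hx] at this
      rw [this]; push_cast; ring
    intro x n m hn hm hsn hsm
    rw [half x n m hn hm hsn, half x m n hm hn hsm, Nat.mul_comm]
  set C : ℝ → ℝ := fun x => (N x : ℝ) * M (x / (N x : ℝ)) with hCdef
  have hrep : ∀ (x : ℝ) (n : ℕ), 0 < n → |x / (n : ℝ)| < ε → C x = (n : ℝ) * M (x / n) := by
    intro x n hn hs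
    exact key x (N x) n (Nat.succ_pos _) hn (hNsmall x) hs
  refine ⟨C, ?_, ?_⟩
  · intro x y
    set n : ℕ := N x + N y + N (x + y) with hn
    have hnp : 0 < n := by positivity
    have hnr : (0:ℝ) < (n : ℝ) := by exact_mod_cast hnp
    have hs : ∀ z : ℝ, N z ≤ n → |z / (n : ℝ)| < ε := by
      intro z hz
      have hzr : ((N z : ℕ) : ℝ) ≤ (n : ℝ) := by exact_mod_cast hz
      rw [abs_div, abs_of_pos hnr, div_lt_iff₀ hnr]
      calc |z| < ε * (N z : ℝ) := hNbig z
        _ ≤ ε * (n : ℝ) := by nlinarith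
    have hsx : |x / (n : ℝ)| < ε := hs x (by omega)
    have hsy : |y / (n : ℝ)| < ε := hs y (by omega)
    have hsxy : |(x + y) / (n : ℝ)| < ε := hs (x + y) (by omega)
    rw [hrep x n hnp hsx, hrep y n hnp hsy, hrep (x + y) n hnp hsxy,
      add_div, hM _ _ hsx hsy]
    ring
  · intro t ht
    have hNt : (0:ℝ) < (N t : ℝ) := hNpos t
    have h1 : M ((N t : ℝ) * (t / (N t : ℝ))) = (N t : ℝ) * M (t / (N t : ℝ)) := by
      apply hiter
      rw [mul_div_cancel₀ t (ne_of_gt hNt)]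
      exact ht
    rw [mul_div_cancel₀ t (ne_of_gt hNt)] at h1
    simpa [hCdef] using h1.symm

/-- Suppose `g_k = D + μ_k` on a nonempty open subinterval `U ⊆ I`, where
`D : ℝ → ℝ` is an invertible additive function (with inverse `Dinv`).  If
`(F,f1,f2,G,g1,g2)` solves equation (1), then there exist an additive `C : ℝ → ℝ` and
constants `λ1, λ2 ∈ ℝ` such that `f_k(x) = C(x) + λ_k` on `U` and
`G(u) = F(D⁻¹(u−μ)/2) + C(D⁻¹(u−μ)) + λ1 + λ2` on `g1(U) + g2(U)`, where `μ = μ1 + μ2`. -/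
theorem stmt6
    (I : Set ℝ) (hIo : IsOpen I) (hIc : I.OrdConnected) (hIne : I.Nonempty)
    (U : Set ℝ) (hUo : IsOpen U) (hUc : U.OrdConnected) (hUne : U.Nonempty) (hUI : U ⊆ I)
    (mu1 mu2 : ℝ) (D Dinv : ℝ → ℝ)
    (hD : ∀ s t : ℝ, D (s + t) = D s + D t)
    (hDinv1 : Function.LeftInverse Dinv D)
    (hDinv2 : Function.RightInverse Dinv D)
    (F f1 f2 G g1 g2 : ℝ → ℝ)
    (hg1 : ∀ x ∈ U, g1 x = D x + mu1)
    (hg2 : ∀ x ∈ U, g2 x = D x + mu2)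
    (hsol : SolvesEq1 I F f1 f2 G g1 g2) :
    ∃ C : ℝ → ℝ, (∀ s t : ℝ, C (s + t) = C s + C t) ∧
      ∃ lam1 lam2 : ℝ,
        (∀ x ∈ U, f1 x = C x + lam1 ∧ f2 x = C x + lam2) ∧
        (∀ u ∈ g1 '' U + g2 '' U,
          G u = F (Dinv (u - (mu1 + mu2)) / 2) + C (Dinv (u - (mu1 + mu2)))
            + lam1 + lam2) := by
  obtain ⟨a, ha⟩ := hUne
  set K : ℝ → ℝ := fun t => G (D t + (mu1 + mu2)) - F (t / 2) with hKdef
  have hK : ∀ x ∈ U, ∀ y ∈ U, f1 x + f2 y = K (x + y) := by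
    intro x hx y hy
    have h := hsol x (hUI hx) y (hUI hy)
    rw [hg1 x hx, hg2 y hy] at h
    have hDxy : D x + mu1 + (D y + mu2) = D (x + y) + (mu1 + mu2) := by rw [hD]; ring
    rw [hDxy] at h
    simp only [hKdef]; linarith
  set M : ℝ → ℝ := fun t => K (t + 2 * a) - K (2 * a) with hMdef
  have hMadd : ∀ s t : ℝ, a + s ∈ U → a + t ∈ U → M (s + t) = M s + M t := by
    intro s t hs ht
    have e1 : f1 (a + s) + f2 (a + t) = K (s + t + 2 * a) := by
      rw [show s + t + 2 * a = (a + s) + (a + t) by ring]; exact hK _ hs _ ht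
    have e2 : f1 (a + s) + f2 a = K (s + 2 * a) := by
      rw [show s + 2 * a = (a + s) + a by ring]; exact hK _ hs _ ha
    have e3 : f1 a + f2 (a + t) = K (t + 2 * a) := by
      rw [show t + 2 * a = a + (a + t) by ring]; exact hK _ ha _ ht
    have e4 : f1 a + f2 a = K (2 * a) := by
      rw [show 2 * a = a + a by ring]; exact hK _ ha _ ha
    simp only [hMdef]; linarith
  obtain ⟨ε, hε, hball⟩ := Metric.isOpen_iff.mp hUo a ha
  have hmem : ∀ t : ℝ, |t| < ε → a + t ∈ U := by
    intro t ht; apply hball; rw [Metric.mem_ball, Real.dist_eq]; simpa using ht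
  obtain ⟨C, hCadd, hCM⟩ :=
    extend_additive M ε hε (fun s t hs ht => hMadd s t (hmem s hs) (hmem t ht))
  have hC0 : C 0 = 0 := by have h := hCadd 0 0; simp only [add_zero] at h; linarith
  have hCnat : ∀ (n : ℕ) (s : ℝ), C ((n : ℝ) * s) = n * C s := by
    intro n s
    induction n with
    | zero => simpa using hC0
    | succ n ih =>
      push_cast
      rw [show ((n : ℝ) + 1) * s = (n : ℝ) * s + s by ring, hCadd, ih]; ring
  have hseg : ∀ t : ℝ, a + t ∈ U → ∀ c : ℝ, 0 ≤ c → c ≤ 1 → a + c * t ∈ U := by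
    intro t ht c h0 h1
    apply hUc.uIcc_subset ha ht
    rw [Set.mem_uIcc]
    rcases le_total 0 t with h | h
    · left; constructor <;> nlinarith
    · right; constructor <;> nlinarith
  have hMC : ∀ t : ℝ, a + t ∈ U → M t = C t := by
    intro t ht
    set n : ℕ := ⌊|t| / ε⌋₊ + 1 with hn
    have hnpos : (0 : ℝ) < (n : ℝ) := by positivity
    have hsmall : |t / (n : ℝ)| < ε := by
      rw [abs_div, abs_of_pos hnpos, div_lt_iff₀ hnpos]
      have h := Nat.lt_floor_add_one (|t| / ε)
      rw [div_lt_iff₀ hε] at h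
      have hc : ((n : ℕ) : ℝ) = (⌊|t| / ε⌋₊ : ℝ) + 1 := by simp [hn]
      rw [hc]; linarith
    have hjmem : ∀ j : ℕ, j ≤ n → a + (j : ℝ) * (t / (n : ℝ)) ∈ U := by
      intro j hj
      rw [show (j : ℝ) * (t / (n : ℝ)) = ((j : ℝ) / (n : ℝ)) * t by ring]
      refine hseg t ht _ (by positivity) ?_
      rw [div_le_one hnpos]; exact_mod_cast hj
    have hMn : ∀ j : ℕ, j ≤ n → M ((j : ℝ) * (t / (n : ℝ))) = j * M (t / (n : ℝ)) := by
      intro j hj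
      induction j with
      | zero => simp only [Nat.cast_zero, zero_mul, hMdef]; norm_num
      | succ j ih =>
        rw [Nat.cast_succ,
          show ((j : ℝ) + 1) * (t / (n : ℝ)) = (j : ℝ) * (t / (n : ℝ)) + t / (n : ℝ) by ring,
          hMadd _ _ (hjmem j (by omega)) (hmem _ hsmall), ih (by omega)]
        ring
    have h1 : M t = (n : ℝ) * M (t / (n : ℝ)) := by
      have h := hMn n le_rfl
      rwa [mul_div_cancel₀ t (ne_of_gt hnpos)] at h
    have h2 : C t = (n : ℝ) * C (t / (n : ℝ)) := by
      have h := hCnat n (t / (n : ℝ))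
      rw [mul_div_cancel₀ t (ne_of_gt hnpos)] at h
      linarith
    rw [h1, h2, hCM (t / (n : ℝ)) hsmall]
  have hf1 : ∀ x ∈ U, f1 x = C x + (K (2 * a) - f2 a - C a) := by
    intro x hx
    have hxa : a + (x - a) ∈ U := by rw [show a + (x - a) = x by ring]; exact hx
    have e := hMC (x - a) hxa
    have hM1 : M (x - a) = K (x + a) - K (2 * a) := by
      simp only [hMdef]; rw [show x - a + 2 * a = x + a by ring]
    have hCdiff : C (x - a) = C x - C a := by
      have h := hCadd (x - a) a
      rw [show x - a + a = x by ring] at h; linarith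
    have e2 := hK x hx a ha
    rw [hM1, hCdiff] at e
    linarith
  have hf2 : ∀ y ∈ U, f2 y = C y + (K (2 * a) - f1 a - C a) := by
    intro y hy
    have hya : a + (y - a) ∈ U := by rw [show a + (y - a) = y by ring]; exact hy
    have e := hMC (y - a) hya
    have hM1 : M (y - a) = K (a + y) - K (2 * a) := by
      simp only [hMdef]; rw [show y - a + 2 * a = a + y by ring]
    have hCdiff : C (y - a) = C y - C a := by
      have h := hCadd (y - a) a
      rw [show y - a + a = y by ring] at h; linarith
    have e2 := hK a ha y hy
    rw [hM1, hCdiff] at e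
    linarith
  refine ⟨C, hCadd, K (2 * a) - f2 a - C a, K (2 * a) - f1 a - C a,
    fun x hx => ⟨hf1 x hx, hf2 x hx⟩, ?_⟩
  intro u hu
  rw [Set.mem_add] at hu
  obtain ⟨p, hp, q, hq, hpq⟩ := hu
  obtain ⟨x, hx, rfl⟩ := hp
  obtain ⟨y, hy, rfl⟩ := hq
  subst hpq
  have hu' : g1 x + g2 y = D (x + y) + (mu1 + mu2) := by
    rw [hg1 x hx, hg2 y hy, hD]; ring
  have hDi : Dinv (g1 x + g2 y - (mu1 + mu2)) = x + y := by
    rw [hu', show D (x + y) + (mu1 + mu2) - (mu1 + mu2) = D (x + y) by ring]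
    exact hDinv1 (x + y)
  have h := hsol x (hUI hx) y (hUI hy)
  rw [hDi]
  rw [hf1 x hx, hf2 y hy] at h
  have hCxy := hCadd x y
  linarith
end

section
/- Let I ⊆ ℝ be a nonempty open interval, μ1, μ2 ∈ ℝ, D : ℝ → ℝ an invertible additive function, and define g_k : I → ℝ by g_k(x) = D(x) + μ_k for k ∈ {1,2}. Then (F,f1,f2,G,g1,g2) solves equation (1) if and only if there exist an additive function C : ℝ → ℝ and constants λ1, λ2 ∈ ℝ such that f_k(x) = C(x) + λ_k for all x ∈ I and k ∈ {1,2}, and G(u) = F(D^{-1}(u−μ)/2) + C(D^{-1}(u−μ)) + λ1 + λ2 for all u ∈ g1(I)+g2(I), where μ := μ1 + μ2. -/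
open Set Pointwise

/-!
Setting `h(s) := G(D s + μ) - F(s/2)`, equation (1) becomes the Pexider equation
`f1 x + f2 y = h (x + y)` on `I × I`. After translating a point `x₀ ∈ I` to the origin, this says
that `k(t) := h(t + 2x₀) - h(2x₀)` is additive on the neighbourhood `J := I - x₀` of `0`.
Such a `k` agrees on `J` with the additive function `C(t) := lim n k(t/n)`: the sequence is
eventually constant, since `n k(t/n) = nm k(t/(nm)) = m k(t/m)` once `t/n, t/m ∈ J`.
Then `f_k = C + λ_k` on `I`, and `G` is read off equation (1) using the additivity of `C`.
-/

open Filter Topology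

section LocallyAdditive

variable {k : ℝ → ℝ} {J : Set ℝ}

lemma map_natCast_mul_of_additiveOn (hJ0 : (0 : ℝ) ∈ J) (hJc : J.OrdConnected)
    (hk : ∀ u ∈ J, ∀ v ∈ J, k (u + v) = k u + k v) (n : ℕ) {w : ℝ} (hnw : (n : ℝ) * w ∈ J) :
    k (n * w) = n * k w := by
  have hmem : ∀ j ≤ n, (j : ℝ) * w ∈ J := by
    intro j hj
    refine hJc.uIcc_subset hJ0 hnw ?_
    have hj' : (j : ℝ) ≤ n := by exact_mod_cast hj
    rw [mem_uIcc]
    rcases le_total 0 w with hw | hw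
    · exact Or.inl ⟨by positivity, by nlinarith⟩
    · exact Or.inr ⟨by nlinarith, by nlinarith⟩
  induction n with
  | zero => simpa using hk 0 hJ0 0 hJ0
  | succ n ih =>
    have hw : w ∈ J := by simpa using hmem 1 (by omega)
    have hnw' := hmem n (by omega)
    rw [Nat.cast_succ, add_one_mul, hk _ hnw' _ hw, ih hnw' fun j hj => hmem j (by omega)]
    ring

noncomputable def additiveExtension (k : ℝ → ℝ) (t : ℝ) : ℝ :=
  limUnder atTop fun n : ℕ => n * k (t / n)

variable (hJ : J ∈ 𝓝 0) (hJc : J.OrdConnected) (hk : ∀ u ∈ J, ∀ v ∈ J, k (u + v) = k u + k v)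
include hJ

lemma eventually_div_natCast_mem (t : ℝ) : ∀ᶠ n : ℕ in atTop, t / n ∈ J :=
  (tendsto_const_div_atTop_nhds_zero_nat t).eventually hJ

include hJc hk

lemma tendsto_additiveExtension (t : ℝ) :
    Tendsto (fun n : ℕ => n * k (t / n)) atTop (𝓝 (additiveExtension k t)) := by
  obtain ⟨N, hN⟩ :=
    ((eventually_div_natCast_mem hJ t).and (eventually_gt_atTop 0)).exists_forall_of_atTop
  have hconst : ∀ n ≥ N, (n : ℝ) * k (t / n) = N * k (t / N) := by
    intro n hn
    obtain ⟨htn, hn0⟩ := hN n hn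
    obtain ⟨htN, hN0⟩ := hN N le_rfl
    have hn0' : (n : ℝ) ≠ 0 := by positivity
    have hN0' : (N : ℝ) ≠ 0 := by positivity
    have e₁ : t / n = N * (t / (n * N)) := by field_simp
    have e₂ : t / N = n * (t / (n * N)) := by field_simp
    rw [e₁] at htn ⊢
    rw [e₂] at htN ⊢
    rw [map_natCast_mul_of_additiveOn (mem_of_mem_nhds hJ) hJc hk N htn,
      map_natCast_mul_of_additiveOn (mem_of_mem_nhds hJ) hJc hk n htN]
    ring
  have hlim : Tendsto (fun n : ℕ => n * k (t / n)) atTop (𝓝 (N * k (t / N))) :=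
    tendsto_const_nhds.congr' (eventually_atTop.2 ⟨N, fun n hn => (hconst n hn).symm⟩)
  rwa [additiveExtension, hlim.limUnder_eq]

lemma additiveExtension_add (s t : ℝ) :
    additiveExtension k (s + t) = additiveExtension k s + additiveExtension k t := by
  refine tendsto_nhds_unique (tendsto_additiveExtension hJ hJc hk (s + t)) ?_
  refine ((tendsto_additiveExtension hJ hJc hk s).add
    (tendsto_additiveExtension hJ hJc hk t)).congr' ?_
  filter_upwards [eventually_div_natCast_mem hJ s, eventually_div_natCast_mem hJ t]
    with n hs ht
  rw [add_div, hk _ hs _ ht, mul_add]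

lemma additiveExtension_eq_of_mem {t : ℝ} (ht : t ∈ J) : additiveExtension k t = k t := by
  refine tendsto_nhds_unique (tendsto_additiveExtension hJ hJc hk t) (tendsto_const_nhds.congr' ?_)
  filter_upwards [eventually_gt_atTop 0] with n hn
  have ht' : t = n * (t / n) := (mul_div_cancel₀ t (by positivity)).symm
  rw [ht'] at ht
  rw [ht', map_natCast_mul_of_additiveOn (mem_of_mem_nhds hJ) hJc hk n ht, ← ht']

lemma exists_additive_eqOn_of_additiveOn :
    ∃ C : ℝ → ℝ, (∀ s t : ℝ, C (s + t) = C s + C t) ∧ EqOn C k J :=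
  ⟨additiveExtension k, additiveExtension_add hJ hJc hk,
    fun _ ht => additiveExtension_eq_of_mem hJ hJc hk ht⟩

end LocallyAdditive

lemma exists_additive_of_pexider_on {I : Set ℝ} (hIo : IsOpen I) (hIc : I.OrdConnected)
    (hIne : I.Nonempty) {f1 f2 h : ℝ → ℝ} (hfh : ∀ x ∈ I, ∀ y ∈ I, f1 x + f2 y = h (x + y)) :
    ∃ C : ℝ → ℝ, (∀ s t : ℝ, C (s + t) = C s + C t) ∧
      ∃ lam1 lam2 : ℝ, ∀ x ∈ I, f1 x = C x + lam1 ∧ f2 x = C x + lam2 := by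
  obtain ⟨x0, hx0⟩ := hIne
  set J := (· + x0) ⁻¹' I
  set k : ℝ → ℝ := fun t => h (t + 2 * x0) - h (2 * x0)
  have hJ : J ∈ 𝓝 0 :=
    (continuous_add_const x0).continuousAt.preimage_mem_nhds (by simpa using hIo.mem_nhds hx0)
  have hJc : J.OrdConnected := hIc.preimage_mono (monotone_id.add_const x0)
  have hk : ∀ u ∈ J, ∀ v ∈ J, k (u + v) = k u + k v := by
    intro u hu v hv
    have h₁ := hfh _ hu _ hv
    have h₂ := hfh _ hu _ hx0
    have h₃ := hfh _ hx0 _ hv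
    have h₄ := hfh _ hx0 _ hx0
    simp only [k]
    ring_nf at h₁ h₂ h₃ h₄ ⊢
    linarith
  obtain ⟨C, hCadd, hCk⟩ := exists_additive_eqOn_of_additiveOn hJ hJc hk
  have hCI : ∀ x ∈ I, h (x + x0) = C x - C x0 + h (2 * x0) := by
    intro x hx
    have hxJ : x - x0 ∈ J := by simpa [J] using hx
    have hkx : C (x - x0) = h (x + x0) - h (2 * x0) := by
      rw [hCk hxJ]
      show h (x - x0 + 2 * x0) - h (2 * x0) = _
      ring_nf
    have hCx := hCadd (x - x0) x0
    rw [sub_add_cancel] at hCx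
    linarith
  refine ⟨C, hCadd, h (2 * x0) - C x0 - f2 x0, h (2 * x0) - C x0 - f1 x0, fun x hx => ⟨?_, ?_⟩⟩
  · linarith [hfh x hx x0 hx0, hCI x hx]
  · linarith [add_comm x0 x ▸ hfh x0 hx0 x hx, hCI x hx]

theorem stmt7_general
    (I : Set ℝ) (hIo : IsOpen I) (hIc : I.OrdConnected) (hIne : I.Nonempty)
    (mu1 mu2 : ℝ) (D Dinv : ℝ → ℝ)
    (hD : ∀ s t : ℝ, D (s + t) = D s + D t)
    (hDinv1 : Function.LeftInverse Dinv D)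
    (F f1 f2 G g1 g2 : ℝ → ℝ)
    (hg1 : ∀ x ∈ I, g1 x = D x + mu1)
    (hg2 : ∀ x ∈ I, g2 x = D x + mu2) :
    SolvesEq1 I F f1 f2 G g1 g2 ↔
      ∃ C : ℝ → ℝ, (∀ s t : ℝ, C (s + t) = C s + C t) ∧
        ∃ lam1 lam2 : ℝ,
          (∀ x ∈ I, f1 x = C x + lam1 ∧ f2 x = C x + lam2) ∧
          (∀ u ∈ g1 '' I + g2 '' I,
            G u = F (Dinv (u - (mu1 + mu2)) / 2) + C (Dinv (u - (mu1 + mu2)))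
              + lam1 + lam2) := by
  have hg : ∀ x ∈ I, ∀ y ∈ I, g1 x + g2 y - (mu1 + mu2) = D (x + y) := by
    intro x hx y hy
    rw [hg1 x hx, hg2 y hy, hD]
    ring
  constructor
  · intro heq
    have hpexider : ∀ x ∈ I, ∀ y ∈ I,
        f1 x + f2 y = G (D (x + y) + (mu1 + mu2)) - F ((x + y) / 2) := by
      intro x hx y hy
      rw [← hg x hx y hy, sub_add_cancel, ← heq x hx y hy]
      ring
    obtain ⟨C, hCadd, lam1, lam2, hf⟩ := exists_additive_of_pexider_on hIo hIc hIne
      (h := fun s => G (D s + (mu1 + mu2)) - F (s / 2)) hpexider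
    refine ⟨C, hCadd, lam1, lam2, hf, ?_⟩
    rintro _ ⟨_, ⟨x, hx, rfl⟩, _, ⟨y, hy, rfl⟩, rfl⟩
    rw [hg x hx y hy, hDinv1, ← heq x hx y hy, (hf x hx).1, (hf y hy).2, hCadd]
    ring
  · rintro ⟨C, hCadd, lam1, lam2, hf, hG⟩ x hx y hy
    rw [hG _ (add_mem_add (mem_image_of_mem _ hx) (mem_image_of_mem _ hy)), hg x hx y hy,
      hDinv1, (hf x hx).1, (hf y hy).2, hCadd]
    ring

/-- Suppose `g_k = D + μ_k` on `I`, where `D : ℝ → ℝ` is an invertible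
additive function (with inverse `Dinv`).  Then `(F,f1,f2,G,g1,g2)` solves equation (1)
if and only if there exist an additive `C : ℝ → ℝ` and constants `λ1, λ2 ∈ ℝ` such that
`f_k(x) = C(x) + λ_k` on `I` and `G(u) = F(D⁻¹(u−μ)/2) + C(D⁻¹(u−μ)) + λ1 + λ2` on
`g1(I) + g2(I)`, where `μ = μ1 + μ2`. -/
theorem stmt7
    (I : Set ℝ) (hIo : IsOpen I) (hIc : I.OrdConnected) (hIne : I.Nonempty)
    (mu1 mu2 : ℝ) (D Dinv : ℝ → ℝ)
    (hD : ∀ s t : ℝ, D (s + t) = D s + D t)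
    (hDinv1 : Function.LeftInverse Dinv D)
    (hDinv2 : Function.RightInverse Dinv D)
    (F f1 f2 G g1 g2 : ℝ → ℝ)
    (hg1 : ∀ x ∈ I, g1 x = D x + mu1)
    (hg2 : ∀ x ∈ I, g2 x = D x + mu2) :
    SolvesEq1 I F f1 f2 G g1 g2 ↔
      ∃ C : ℝ → ℝ, (∀ s t : ℝ, C (s + t) = C s + C t) ∧
        ∃ lam1 lam2 : ℝ,
          (∀ x ∈ I, f1 x = C x + lam1 ∧ f2 x = C x + lam2) ∧
          (∀ u ∈ g1 '' I + g2 '' I,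
            G u = F (Dinv (u - (mu1 + mu2)) / 2) + C (Dinv (u - (mu1 + mu2)))
              + lam1 + lam2) :=
  stmt7_general I hIo hIc hIne mu1 mu2 D Dinv hD hDinv1 F f1 f2 G g1 g2 hg1 hg2
end

section
/- Let I ⊆ ℝ be a nonempty open interval and let A, B, C, D, λ, λ1, λ2, μ1, μ2, α, β, β1, β2 ∈ ℝ with D ≠ 0, α ≠ 0, and β1 + β2 = β + ℓπ for some integer ℓ. Assume cos(α·x + β_k) ≠ 0 for all x ∈ I and k ∈ {1,2}, and sin(α·(x+y) + β) ≠ 0 for all x, y ∈ I. Define F(x) := 2A·ln|sin(2αx+β)| + 2Bx + λ, f_k(x) := −A·ln|cos(2αx+2β_k)+1| − Bx + C·tan(αx+β_k) + λ_k, g_k(x) := D·tan(αx+β_k) + μ_k, and G(u) := 2A·ln|(u−μ)/(2D)| + C·(u−μ)/D + Λ for u ∈ g1(I)+g2(I), where μ := μ1+μ2 and Λ := λ+λ1+λ2. Then (F,f1,f2,G,g1,g2) solves equation (1). -/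
open Set Real

lemma tan_add_eq_sin_div (a b : ℝ) (ha : Real.cos a ≠ 0) (hb : Real.cos b ≠ 0) :
    Real.tan a + Real.tan b = Real.sin (a + b) / (Real.cos a * Real.cos b) := by
  rw [Real.tan_eq_sin_div_cos, Real.tan_eq_sin_div_cos, div_add_div _ _ ha hb, Real.sin_add]

/-- Trigonometric solution (T.2): with `D ≠ 0`, `α ≠ 0`,
`β1 + β2 = β + ℓπ` for some `ℓ ∈ ℤ`, `cos(αx + β_k) ≠ 0` on `I` and
`sin(α(x+y) + β) ≠ 0` for `x, y ∈ I`, the tuple given by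
`F(x) = 2A·ln|sin(2αx+β)| + 2Bx + λ`,
`f_k(x) = −A·ln|cos(2αx+2β_k)+1| − Bx + C·tan(αx+β_k) + λ_k`,
`g_k(x) = D·tan(αx+β_k) + μ_k`, and
`G(u) = 2A·ln|(u−μ)/(2D)| + C·(u−μ)/D + Λ` on `g1(I)+g2(I)`,
where `μ = μ1+μ2` and `Λ = λ+λ1+λ2`, solves equation (1). -/
theorem stmt15
    (I : Set ℝ) (hIo : IsOpen I) (hIc : I.OrdConnected) (hIne : I.Nonempty)
    (A B C D lam lam1 lam2 mu1 mu2 α β β1 β2 : ℝ)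
    (hD : D ≠ 0) (hα : α ≠ 0)
    (hβ : ∃ ℓ : ℤ, β1 + β2 = β + (ℓ : ℝ) * Real.pi)
    (hcos1 : ∀ x ∈ I, Real.cos (α * x + β1) ≠ 0)
    (hcos2 : ∀ x ∈ I, Real.cos (α * x + β2) ≠ 0)
    (hsin : ∀ x ∈ I, ∀ y ∈ I, Real.sin (α * (x + y) + β) ≠ 0)
    (F f1 f2 g1 g2 G : ℝ → ℝ)
    (hF : ∀ x ∈ I, F x = 2 * A * Real.log |Real.sin (2 * α * x + β)| + 2 * B * x + lam)
    (hf1 : ∀ x ∈ I, f1 x = -A * Real.log |Real.cos (2 * α * x + 2 * β1) + 1|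
      - B * x + C * Real.tan (α * x + β1) + lam1)
    (hf2 : ∀ x ∈ I, f2 x = -A * Real.log |Real.cos (2 * α * x + 2 * β2) + 1|
      - B * x + C * Real.tan (α * x + β2) + lam2)
    (hg1 : ∀ x ∈ I, g1 x = D * Real.tan (α * x + β1) + mu1)
    (hg2 : ∀ x ∈ I, g2 x = D * Real.tan (α * x + β2) + mu2)
    (hG : ∀ u : ℝ, (∃ x ∈ I, ∃ y ∈ I, u = g1 x + g2 y) →
      G u = 2 * A * Real.log |(u - (mu1 + mu2)) / (2 * D)|
        + C * (u - (mu1 + mu2)) / D + (lam + lam1 + lam2)) :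
    SolvesEq1 I F f1 f2 G g1 g2 := by

  intro x hx y hy
  obtain ⟨ℓ, hβℓ⟩ := hβ
  have hxy : (x + y) / 2 ∈ I := by
    rcases le_total x y with h | h
    · exact hIc.out hx hy ⟨by linarith, by linarith⟩
    · exact hIc.out hy hx ⟨by linarith, by linarith⟩
  have hc1 := hcos1 x hx
  have hc2 := hcos2 y hy
  have hs := hsin x hx y hy
  rw [hF _ hxy, hf1 _ hx, hf2 _ hy, hG _ ⟨x, hx, y, hy, rfl⟩, hg1 _ hx, hg2 _ hy]
  set ξ := α * x + β1 with hξ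
  set η := α * y + β2 with hη
  set s := Real.sin (α * (x + y) + β) with hsdef
  have e1 : 2 * α * ((x + y) / 2) + β = α * (x + y) + β := by ring
  have e2 : 2 * α * x + 2 * β1 = 2 * ξ := by rw [hξ]; ring
  have e3 : 2 * α * y + 2 * β2 = 2 * η := by rw [hη]; ring
  have e4 : ξ + η = α * (x + y) + β + (ℓ : ℝ) * π := by rw [hξ, hη]; linarith [hβℓ]
  have hsin' : Real.sin (ξ + η) = (-1 : ℝ) ^ ℓ * s := by
    rw [e4, Real.sin_add_int_mul_pi, hsdef]
  have hne : ((-1 : ℝ) ^ ℓ) ≠ 0 := zpow_ne_zero ℓ (by norm_num)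
  have hsne : Real.sin (ξ + η) ≠ 0 := by rw [hsin']; exact mul_ne_zero hne hs
  have ht : Real.tan ξ + Real.tan η = Real.sin (ξ + η) / (Real.cos ξ * Real.cos η) :=
    tan_add_eq_sin_div ξ η hc1 hc2
  have harg : D * Real.tan ξ + mu1 + (D * Real.tan η + mu2) - (mu1 + mu2)
      = D * (Real.tan ξ + Real.tan η) := by ring
  rw [e1, e2, e3, harg]
  have hargdiv : D * (Real.tan ξ + Real.tan η) / (2 * D)
      = Real.sin (ξ + η) / (2 * (Real.cos ξ * Real.cos η)) := by
    rw [ht]; field_simp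
  have hargC : C * (D * (Real.tan ξ + Real.tan η)) / D = C * (Real.tan ξ + Real.tan η) := by
    field_simp
  rw [hargdiv, hargC]
  have hcos2ξ : Real.cos (2 * ξ) + 1 = 2 * Real.cos ξ ^ 2 := by
    rw [Real.cos_two_mul]; ring
  have hcos2η : Real.cos (2 * η) + 1 = 2 * Real.cos η ^ 2 := by
    rw [Real.cos_two_mul]; ring
  rw [hcos2ξ, hcos2η, Real.log_abs, Real.log_abs, Real.log_abs, Real.log_abs]
  have l1 : Real.log (Real.sin (ξ + η) / (2 * (Real.cos ξ * Real.cos η)))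
      = Real.log s - (Real.log 2 + Real.log (Real.cos ξ) + Real.log (Real.cos η)) := by
    rw [Real.log_div hsne (by positivity), Real.log_mul two_ne_zero (mul_ne_zero hc1 hc2),
      Real.log_mul hc1 hc2, hsin', Real.log_mul hne hs, Real.log_zpow]
    simp [Real.log_neg_eq_log]
    ring
  have l2 : Real.log (2 * Real.cos ξ ^ 2) = Real.log 2 + 2 * Real.log (Real.cos ξ) := by
    rw [Real.log_mul two_ne_zero (pow_ne_zero 2 hc1), Real.log_pow]; push_cast; ring
  have l3 : Real.log (2 * Real.cos η ^ 2) = Real.log 2 + 2 * Real.log (Real.cos η) := by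
    rw [Real.log_mul two_ne_zero (pow_ne_zero 2 hc2), Real.log_pow]; push_cast; ring
  rw [l1, l2, l3]
  ring
end

section
/- Let I ⊆ ℝ be a nonempty open interval and let A, B, C, D, λ, λ1, λ2, μ1, μ2, α, β1, β2 ∈ ℝ with α ≠ 0, D ≠ 0, and β := β1 + β2. Assume α·x + β_k ≠ 0 for all x ∈ I and k ∈ {1,2}, and α·(x+y) + β ≠ 0 for all x, y ∈ I. Define F(x) := 2A·ln|2αx+β| + 2Bx + λ, f_k(x) := −2A·ln|αx+β_k| − Bx + C·(αx+β_k)^{-1} + λ_k, g_k(x) := D·(αx+β_k)^{-1} + μ_k, and G(u) := 2A·ln|(u−μ)/D| + C·(u−μ)/D + Λ for u ∈ g1(I)+g2(I), where μ := μ1+μ2 and Λ := λ+λ1+λ2. Then (F,f1,f2,G,g1,g2) solves equation (1). -/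
open Set Real

/-- Polynomial solution (P1.2): with `α ≠ 0`, `D ≠ 0`, `β = β1 + β2`,
`αx + β_k ≠ 0` on `I`, and `α(x+y) + β ≠ 0` for `x, y ∈ I`, the tuple given by
`F(x) = 2A·ln|2αx+β| + 2Bx + λ`,
`f_k(x) = −2A·ln|αx+β_k| − Bx + C·(αx+β_k)⁻¹ + λ_k`,
`g_k(x) = D·(αx+β_k)⁻¹ + μ_k`, and
`G(u) = 2A·ln|(u−μ)/D| + C·(u−μ)/D + Λ` on `g1(I)+g2(I)`,
where `μ = μ1+μ2` and `Λ = λ+λ1+λ2`, solves equation (1). -/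
theorem stmt17
    (I : Set ℝ) (hIo : IsOpen I) (hIc : I.OrdConnected) (hIne : I.Nonempty)
    (A B C D lam lam1 lam2 mu1 mu2 α β1 β2 : ℝ)
    (hα : α ≠ 0) (hD : D ≠ 0)
    (hden1 : ∀ x ∈ I, α * x + β1 ≠ 0)
    (hden2 : ∀ x ∈ I, α * x + β2 ≠ 0)
    (hden : ∀ x ∈ I, ∀ y ∈ I, α * (x + y) + (β1 + β2) ≠ 0)
    (F f1 f2 g1 g2 G : ℝ → ℝ)
    (hF : ∀ x ∈ I, F x = 2 * A * Real.log |2 * α * x + (β1 + β2)| + 2 * B * x + lam)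
    (hf1 : ∀ x ∈ I, f1 x = -2 * A * Real.log |α * x + β1| - B * x
      + C * (α * x + β1)⁻¹ + lam1)
    (hf2 : ∀ x ∈ I, f2 x = -2 * A * Real.log |α * x + β2| - B * x
      + C * (α * x + β2)⁻¹ + lam2)
    (hg1 : ∀ x ∈ I, g1 x = D * (α * x + β1)⁻¹ + mu1)
    (hg2 : ∀ x ∈ I, g2 x = D * (α * x + β2)⁻¹ + mu2)
    (hG : ∀ u : ℝ, (∃ x ∈ I, ∃ y ∈ I, u = g1 x + g2 y) →
      G u = 2 * A * Real.log |(u - (mu1 + mu2)) / D|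
        + C * (u - (mu1 + mu2)) / D + (lam + lam1 + lam2)) :
    SolvesEq1 I F f1 f2 G g1 g2 := by
  intro x hx y hy
  have hconv : Convex ℝ I := convex_iff_ordConnected.mpr hIc
  have hmid : (x + y) / 2 ∈ I := by
    have h := hconv hx hy (by norm_num : (0:ℝ) ≤ 1/2) (by norm_num : (0:ℝ) ≤ 1/2)
      (by norm_num)
    have e : (x + y) / 2 = (1/2 : ℝ) • x + (1/2 : ℝ) • y := by
      simp [smul_eq_mul]; ring
    rwa [e]
  set ξ := α * x + β1 with hξdef
  set η := α * y + β2 with hηdef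
  have hξ : ξ ≠ 0 := hden1 x hx
  have hη : η ≠ 0 := hden2 y hy
  have hs : ξ + η ≠ 0 := by
    intro h
    exact hden x hx y hy (by rw [hξdef, hηdef] at h; linarith)
  rw [hF _ hmid, hf1 _ hx, hf2 _ hy,
    hG (g1 x + g2 y) ⟨x, hx, y, hy, rfl⟩, hg1 _ hx, hg2 _ hy]
  rw [← hξdef, ← hηdef]
  have hu : (D * ξ⁻¹ + mu1 + (D * η⁻¹ + mu2) - (mu1 + mu2)) / D = (ξ + η) / (ξ * η) := by
    field_simp
    ring
  rw [hu]
  have hmid2 : 2 * α * ((x + y) / 2) + (β1 + β2) = ξ + η := by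
    rw [hξdef, hηdef]; ring
  rw [hmid2]
  have hlog : Real.log |(ξ + η) / (ξ * η)| =
      Real.log |ξ + η| - (Real.log |ξ| + Real.log |η|) := by
    rw [abs_div, abs_mul, Real.log_div (abs_ne_zero.mpr hs)
      (by positivity), Real.log_mul (abs_ne_zero.mpr hξ) (abs_ne_zero.mpr hη)]
  rw [hlog]
  have hC : C * (D * ξ⁻¹ + mu1 + (D * η⁻¹ + mu2) - (mu1 + mu2)) / D
      = C * ξ⁻¹ + C * η⁻¹ := by
    field_simp
    ring
  rw [hC]
  ring
end

section
/- Let I ⊆ ℝ be a nonempty open interval and let A, B, C, D, λ, λ1, λ2, μ1, μ2, β1, β2 ∈ ℝ with D ≠ 0 and β := β1 + β2. Assume x + β_k > 0 for all x ∈ I and k ∈ {1,2}. Define F(x) := A·(2x+β)² + 2Bx + λ, f_k(x) := −A·(x+β_k)² − Bx + C·ln(x+β_k) + λ_k, g_k(x) := D·ln(x+β_k) + μ_k, and G(u) := 2A·exp((u−μ)/D) + C·(u−μ)/D + Λ for u ∈ g1(I)+g2(I), where μ := μ1+μ2 and Λ := λ+λ1+λ2. Then (F,f1,f2,G,g1,g2)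 solves equation (1). -/
open Set Real

/-- Polynomial solution (P2.2): with `D ≠ 0`, `β = β1 + β2`, and
`x + β_k > 0` on `I`, the tuple given by
`F(x) = A·(2x+β)² + 2Bx + λ`,
`f_k(x) = −A·(x+β_k)² − Bx + C·ln(x+β_k) + λ_k`,
`g_k(x) = D·ln(x+β_k) + μ_k`, and
`G(u) = 2A·exp((u−μ)/D) + C·(u−μ)/D + Λ` on `g1(I)+g2(I)`,
where `μ = μ1+μ2` and `Λ = λ+λ1+λ2`, solves equation (1). -/
theorem stmt18
    (I : Set ℝ) (hIo : IsOpen I) (hIc : I.OrdConnected) (hIne : I.Nonempty)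
    (A B C D lam lam1 lam2 mu1 mu2 β1 β2 : ℝ)
    (hD : D ≠ 0)
    (hpos1 : ∀ x ∈ I, x + β1 > 0)
    (hpos2 : ∀ x ∈ I, x + β2 > 0)
    (F f1 f2 g1 g2 G : ℝ → ℝ)
    (hF : ∀ x ∈ I, F x = A * (2 * x + (β1 + β2)) ^ 2 + 2 * B * x + lam)
    (hf1 : ∀ x ∈ I, f1 x = -A * (x + β1) ^ 2 - B * x + C * Real.log (x + β1) + lam1)
    (hf2 : ∀ x ∈ I, f2 x = -A * (x + β2) ^ 2 - B * x + C * Real.log (x + β2) + lam2)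
    (hg1 : ∀ x ∈ I, g1 x = D * Real.log (x + β1) + mu1)
    (hg2 : ∀ x ∈ I, g2 x = D * Real.log (x + β2) + mu2)
    (hG : ∀ u : ℝ, (∃ x ∈ I, ∃ y ∈ I, u = g1 x + g2 y) →
      G u = 2 * A * Real.exp ((u - (mu1 + mu2)) / D)
        + C * (u - (mu1 + mu2)) / D + (lam + lam1 + lam2)) :
    SolvesEq1 I F f1 f2 G g1 g2 := by
  intro x hx y hy
  have hmid : (x + y) / 2 ∈ I := by
    rcases le_total x y with h | h
    · exact hIc.out hx hy ⟨by linarith, by linarith⟩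
    · exact hIc.out hy hx ⟨by linarith, by linarith⟩
  have hx1 := hpos1 x hx
  have hy2 := hpos2 y hy
  rw [hF _ hmid, hf1 x hx, hf2 y hy,
    hG (g1 x + g2 y) ⟨x, hx, y, hy, rfl⟩, hg1 x hx, hg2 y hy]
  have harg : (D * Real.log (x + β1) + mu1 + (D * Real.log (y + β2) + mu2)
      - (mu1 + mu2)) / D = Real.log (x + β1) + Real.log (y + β2) := by
    field_simp; ring
  rw [mul_div_assoc, harg, Real.exp_add, Real.exp_log hx1, Real.exp_log hy2]
  ring
end

section
/- Let I ⊆ ℝ be a nonempty open interval and let A, B, C, D, λ, λ1, λ2, μ1, μ2, κ, α1, α2, γ ∈ ℝ with κ > 0 and D ≠ 0, and set α := α1·α2 and β := γ². Assume α_k·exp(κx) + γ ≠ 0 for all x ∈ I and k ∈ {1,2}, and α·exp(2κz) − β ≠ 0 for all z ∈ I. Define F(x) := 2A·ln|α·exp(2κx) − β| + 2Bx + λ, f_k(x) := −2A·ln|α_k·exp(κx)+γ| − Bx + C·(α_k·exp(κx)+γ)^{-1} + λ_k, g_k(x) := D·(α_k·exp(κx)+γ)^{-1} + μ_k, and G(u)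 := 2A·ln|1 − γ·(u−μ)/D| + C·(u−μ)/D + Λ for u ∈ g1(I)+g2(I), where μ := μ1+μ2 and Λ := λ+λ1+λ2. Then (F,f1,f2,G,g1,g2) solves equation (1). -/
open Set Real

/-- Hyperbolic solution (H2.1): with `κ > 0`, `D ≠ 0`, `α = α1·α2`,
`β = γ²`, `α_k·exp(κx) + γ ≠ 0` on `I`, and `α·exp(2κz) − β ≠ 0` on `I`, the tuple given by
`F(x) = 2A·ln|α·exp(2κx) − β| + 2Bx + λ`,
`f_k(x) = −2A·ln|α_k·exp(κx)+γ| − Bx + C·(α_k·exp(κx)+γ)⁻¹ + λ_k`,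
`g_k(x) = D·(α_k·exp(κx)+γ)⁻¹ + μ_k`, and
`G(u) = 2A·ln|1 − γ·(u−μ)/D| + C·(u−μ)/D + Λ` on `g1(I)+g2(I)`,
where `μ = μ1+μ2` and `Λ = λ+λ1+λ2`, solves equation (1). -/
theorem stmt19
    (I : Set ℝ) (hIo : IsOpen I) (hIc : I.OrdConnected) (hIne : I.Nonempty)
    (A B C D lam lam1 lam2 mu1 mu2 κ α1 α2 γ : ℝ)
    (hκ : 0 < κ) (hD : D ≠ 0)
    (hden1 : ∀ x ∈ I, α1 * Real.exp (κ * x) + γ ≠ 0)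
    (hden2 : ∀ x ∈ I, α2 * Real.exp (κ * x) + γ ≠ 0)
    (hden : ∀ z ∈ I, α1 * α2 * Real.exp (2 * κ * z) - γ ^ 2 ≠ 0)
    (F f1 f2 g1 g2 G : ℝ → ℝ)
    (hF : ∀ x ∈ I, F x = 2 * A * Real.log |α1 * α2 * Real.exp (2 * κ * x) - γ ^ 2|
      + 2 * B * x + lam)
    (hf1 : ∀ x ∈ I, f1 x = -2 * A * Real.log |α1 * Real.exp (κ * x) + γ| - B * x
      + C * (α1 * Real.exp (κ * x) + γ)⁻¹ + lam1)
    (hf2 : ∀ x ∈ I, f2 x = -2 * A * Real.log |α2 * Real.exp (κ * x) + γ| - B * x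
      + C * (α2 * Real.exp (κ * x) + γ)⁻¹ + lam2)
    (hg1 : ∀ x ∈ I, g1 x = D * (α1 * Real.exp (κ * x) + γ)⁻¹ + mu1)
    (hg2 : ∀ x ∈ I, g2 x = D * (α2 * Real.exp (κ * x) + γ)⁻¹ + mu2)
    (hG : ∀ u : ℝ, (∃ x ∈ I, ∃ y ∈ I, u = g1 x + g2 y) →
      G u = 2 * A * Real.log |1 - γ * (u - (mu1 + mu2)) / D|
        + C * (u - (mu1 + mu2)) / D + (lam + lam1 + lam2)) :
    SolvesEq1 I F f1 f2 G g1 g2 := by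
  intro x hx y hy
  have hmid : (x + y) / 2 ∈ I := by
    have hc : Convex ℝ I := hIc.convex
    have h := hc hx hy (by norm_num : (0:ℝ) ≤ 1/2) (by norm_num : (0:ℝ) ≤ 1/2) (by norm_num)
    have heq : (x + y) / 2 = (2:ℝ)⁻¹ * x + 2⁻¹ * y := by ring
    rw [heq]
    simpa [smul_eq_mul] using h
  set E1 := Real.exp (κ * x) with hE1
  set E2 := Real.exp (κ * y) with hE2
  have hE : Real.exp (2 * κ * ((x + y) / 2)) = E1 * E2 := by
    rw [hE1, hE2, ← Real.exp_add]; ring_nf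
  have hxi : α1 * E1 + γ ≠ 0 := hden1 x hx
  have heta : α2 * E2 + γ ≠ 0 := hden2 y hy
  have hP : α1 * α2 * (E1 * E2) - γ ^ 2 ≠ 0 := by
    have := hden _ hmid
    rwa [hE] at this
  have hu : g1 x + g2 y = D * (α1 * E1 + γ)⁻¹ + D * (α2 * E2 + γ)⁻¹ + (mu1 + mu2) := by
    rw [hg1 x hx, hg2 y hy]; ring
  rw [hF _ hmid, hf1 x hx, hf2 y hy, hG _ ⟨x, hx, y, hy, rfl⟩, hu, hE]
  have harg : 1 - γ * (D * (α1 * E1 + γ)⁻¹ + D * (α2 * E2 + γ)⁻¹ + (mu1 + mu2)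
      - (mu1 + mu2)) / D = (α1 * α2 * (E1 * E2) - γ ^ 2) * (α1 * E1 + γ)⁻¹ * (α2 * E2 + γ)⁻¹ := by
    field_simp
    ring
  have hCterm : C * (D * (α1 * E1 + γ)⁻¹ + D * (α2 * E2 + γ)⁻¹ + (mu1 + mu2)
      - (mu1 + mu2)) / D = C * (α1 * E1 + γ)⁻¹ + C * (α2 * E2 + γ)⁻¹ := by
    field_simp
    ring
  rw [harg, hCterm]
  have hlog : Real.log |(α1 * α2 * (E1 * E2) - γ ^ 2) * (α1 * E1 + γ)⁻¹ * (α2 * E2 + γ)⁻¹|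
      = Real.log |α1 * α2 * (E1 * E2) - γ ^ 2| - Real.log |α1 * E1 + γ|
        - Real.log |α2 * E2 + γ| := by
    rw [abs_mul, abs_mul, abs_inv, abs_inv,
      Real.log_mul (by positivity) (by positivity), Real.log_mul (by positivity) (by positivity),
      Real.log_inv, Real.log_inv]
    ring
  rw [hlog]
  ring
end
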